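/- arXiv:math/9805131 — 5 statements merged into one kernel-verified Lean document; each statement's English description precedes it below -/
import Mathlib

section
/- The operator X defined by (Xf)(t) = i t⁻¹ (f(q⁻¹t) − f(qt)) on the domain D(X) = {f ∈ H : t⁻¹ f(t) ∈ H} is a symmetric operator on H (i.e., D(X) is dense and ⟨Xf, g⟩ = ⟨f, Xg⟩ for all f, g ∈ D(X)); moreover U maps D(X) onto D(X) and U* X U = q X on D(X). -/
open MeasureTheory Set Filter Function
open scoped ENNReal Topology ComplexConjugate

/-!
Splitting `(0, ∞)` into the fundamental domains `[q^(n+1), q^n)`, the defining property of `μ`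
gives the dilation law `μ.map (q * ·) = q⁻¹ • μ`: the measure `t⁻¹ dμ(t)` is invariant under
`t ↦ q t`. This change of variables exchanges the two shifted terms of `⟨Xf, g⟩` and `⟨f, Xg⟩`,
which gives symmetry. `U` is a multiple of the dilation by `q`, which preserves `D(X)` and
commutes with `X` up to the factor `q`. The domain is dense because the truncations of `f` to
`{t | |t|⁻¹ ≤ n}` lie in `D(X)` and converge to `f` by dominated convergence.
-/

section Partition

variable {q : ℝ}

theorem pairwise_disjoint_Ico_zpow_succ_zpow (hq0 : 0 < q) (hq1 : q < 1) :
    Pairwise (Disjoint on fun n : ℤ => Ico (q ^ (n + 1)) (q ^ n)) := by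
  have hanti : Antitone (fun n : ℤ => q ^ n) := (zpow_right_strictAnti₀ hq0 hq1).antitone
  intro m n hmn
  rcases hmn.lt_or_gt with h | h
  · exact Ico_disjoint_Ico.2 <|
      (min_le_right _ _).trans <| (hanti (by omega)).trans (le_max_left _ _)
  · exact Ico_disjoint_Ico.2 <|
      (min_le_left _ _).trans <| (hanti (by omega)).trans (le_max_right _ _)

theorem iUnion_Ico_zpow_succ_zpow (hq0 : 0 < q) (hq1 : q < 1) :
    ⋃ n : ℤ, Ico (q ^ (n + 1)) (q ^ n) = Ioi 0 := by
  ext t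
  simp only [mem_iUnion, mem_Ico, mem_Ioi]
  constructor
  · rintro ⟨n, hn, -⟩
    exact (zpow_pos hq0 _).trans_le hn
  · intro ht
    obtain ⟨n, hn₁, hn₂⟩ := exists_mem_Ico_zpow ht ((one_lt_inv₀ hq0).2 hq1)
    refine ⟨-(n + 1), ?_, ?_⟩
    · rwa [show -(n + 1) + 1 = -n by ring, zpow_neg, ← inv_zpow]
    · rwa [zpow_neg, ← inv_zpow]

theorem image_mul_left_zpow_Ico (hq0 : 0 < q) (n : ℤ) :
    (q ^ n * ·) '' Ico q 1 = Ico (q ^ (n + 1)) (q ^ n) := by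
  rw [image_mul_left_Ico (zpow_pos hq0 n), mul_one, ← zpow_add_one₀ hq0.ne']

end Partition

theorem map_mul_left_eq_of_measure_image_zpow {q : ℝ} (hq0 : 0 < q) (hq1 : q < 1)
    {μ₁ μ : Measure ℝ} (hμ0 : μ (Ioi 0)ᶜ = 0)
    (hμ : ∀ M : Set ℝ, MeasurableSet M → M ⊆ Ico q 1 → ∀ n : ℤ,
      μ ((fun t => q ^ n * t) '' M) = ENNReal.ofReal (q ^ n) * μ₁ M) :
    μ.map (q * ·) = (ENNReal.ofReal q)⁻¹ • μ := by
  set I : ℤ → Set ℝ := fun n => Ico (q ^ (n + 1)) (q ^ n)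
  have piece : ∀ B, MeasurableSet B → ∀ n : ℤ,
      μ (B ∩ I n) = ENNReal.ofReal (q ^ n) * μ₁ ((q ^ n * ·) ⁻¹' B ∩ Ico q 1) := by
    intro B hB n
    rw [← hμ _ ((measurable_const_mul _ hB).inter measurableSet_Ico) inter_subset_right,
      inter_comm (_ ⁻¹' B), image_inter_preimage, image_mul_left_zpow_Ico hq0, inter_comm]
  have decompose : ∀ B, MeasurableSet B → μ B = ∑' n : ℤ, μ (B ∩ I n) := by
    intro B hB
    rw [← measure_inter_conull hμ0, ← iUnion_Ico_zpow_succ_zpow hq0 hq1, inter_iUnion,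
      measure_iUnion _ fun n => hB.inter measurableSet_Ico]
    exact fun m n hmn =>
      (pairwise_disjoint_Ico_zpow_succ_zpow hq0 hq1 hmn).mono inter_subset_right inter_subset_right
  ext A hA
  have hA' : MeasurableSet ((q * ·) ⁻¹' A) := measurable_const_mul q hA
  have shift : ∀ n : ℤ, μ ((q * ·) ⁻¹' A ∩ I n) = (ENNReal.ofReal q)⁻¹ * μ (A ∩ I (n + 1)) := by
    intro n
    have hq : ENNReal.ofReal q ≠ 0 := by simpa using hq0
    rw [piece _ hA', piece _ hA, ← preimage_comp, zpow_add_one₀ hq0.ne',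
      ENNReal.ofReal_mul (zpow_pos hq0 n).le, ← mul_assoc, mul_comm _ (ENNReal.ofReal q),
      ← mul_assoc, ENNReal.inv_mul_cancel hq ENNReal.ofReal_ne_top, one_mul]
    congr 3
    ext t
    simp [mul_comm (q ^ n) q, mul_assoc]
  rw [Measure.map_apply (measurable_const_mul q) hA, Measure.smul_apply, smul_eq_mul,
    decompose _ hA', decompose _ hA, tsum_congr shift, ENNReal.tsum_mul_left]
  exact congrArg _ ((Equiv.addRight (1 : ℤ)).tsum_eq fun n => μ (A ∩ I n))

section Dilation

variable {μ : Measure ℝ} {c : ℝ} {r : ℝ≥0∞}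

theorem MeasureTheory.Measure.map_inv_mul_left_eq_of_map_mul_left_eq (hc : 0 < c)
    (hμ : μ.map (c * ·) = (ENNReal.ofReal c)⁻¹ • μ) :
    μ.map (c⁻¹ * ·) = (ENNReal.ofReal c⁻¹)⁻¹ • μ := by
  have hback : μ = (ENNReal.ofReal c)⁻¹ • μ.map (c⁻¹ * ·) := by
    conv_lhs => rw [← Measure.map_id (μ := μ)]
    rw [← Measure.map_smul, ← hμ, Measure.map_map (measurable_const_mul _) (measurable_const_mul _)]
    congr 1
    ext t
    simp [inv_mul_cancel_left₀ hc.ne']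
  rw [ENNReal.ofReal_inv_of_pos hc, inv_inv]
  conv_rhs => rw [hback]
  rw [smul_smul, ENNReal.mul_inv_cancel (by simpa using hc) ENNReal.ofReal_ne_top, one_smul]

theorem ae_comp_mul_left_of_map_eq (hμ : μ.map (c * ·) = r • μ) {p : ℝ → Prop}
    (h : ∀ᵐ t ∂μ, p t) : ∀ᵐ t ∂μ, p (c * t) :=
  Measure.QuasiMeasurePreserving.ae
    ⟨measurable_const_mul c, hμ ▸ Measure.smul_absolutelyContinuous⟩ h

theorem MeasureTheory.MemLp.comp_mul_left_of_map_eq {E : Type*} [NormedAddCommGroup E] {p : ℝ≥0∞}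
    (hμ : μ.map (c * ·) = r • μ) (hr : r ≠ ∞) {f : ℝ → E} (hf : MemLp f p μ) :
    MemLp (fun t => f (c * t)) p μ :=
  (hμ ▸ hf.smul_measure hr : MemLp f p (μ.map (c * ·))).comp_of_map
    (measurable_const_mul c).aemeasurable

theorem integral_comp_mul_left_of_map_eq {E : Type*} [NormedAddCommGroup E] [NormedSpace ℝ E]
    (hc : c ≠ 0) (hμ : μ.map (c * ·) = r • μ) (f : ℝ → E) :
    ∫ t, f (c * t) ∂μ = r.toReal • ∫ t, f t ∂μ := by
  rw [← (measurableEmbedding_mulLeft₀ hc).integral_map, hμ, integral_smul_measure]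

end Dilation

section Truncation

variable {α E : Type*} {m : MeasurableSpace α} {μ : Measure α} [NormedAddCommGroup E]
  {p : ℝ≥0∞}

theorem tendsto_eLpNorm_indicator_sub_self (hp0 : p ≠ 0) (hp : p ≠ ∞) {f : α → E}
    (hf : MemLp f p μ) {s : ℕ → Set α} (hs : ∀ n, MeasurableSet (s n))
    (h : ∀ᵐ x ∂μ, ∀ᶠ n in atTop, x ∈ s n) :
    Tendsto (fun n => eLpNorm ((s n).indicator f - f) p μ) atTop (𝓝 0) := by
  have hp' : 0 < p.toReal := ENNReal.toReal_pos hp0 hp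
  have hlin : Tendsto (fun n => ∫⁻ x, ‖((s n).indicator f - f) x‖ₑ ^ p.toReal ∂μ) atTop
      (𝓝 0) := by
    simpa using tendsto_lintegral_of_dominated_convergence' (f := 0)
      (fun x => ‖f x‖ₑ ^ p.toReal)
      (fun n => ((hf.1.indicator (hs n)).sub hf.1).enorm.pow_const _)
      (fun n => ae_of_all _ fun x => by
        by_cases hx : x ∈ s n <;> simp [hx, ENNReal.zero_rpow_of_pos hp'])
      (lintegral_rpow_enorm_lt_top_of_eLpNorm_lt_top hp0 hp hf.2).ne
      (h.mono fun x hx => tendsto_const_nhds.congr' <| hx.mono fun n hn => by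
        simp [hn, ENNReal.zero_rpow_of_pos hp'])
  have := (ENNReal.continuous_rpow_const (y := 1 / p.toReal)).tendsto 0 |>.comp hlin
  rw [ENNReal.zero_rpow_of_pos (one_div_pos.2 hp')] at this
  simpa only [eLpNorm_eq_lintegral_rpow_enorm_toReal hp0 hp, comp_def] using this

theorem dense_setOf_memLp_smul {𝕜 : Type*} [NormedField 𝕜] [NormedSpace 𝕜 E] [Fact (1 ≤ p)]
    (hp : p ≠ ∞) {w : α → 𝕜} (hw : StronglyMeasurable w) :
    Dense {f : Lp E p μ | MemLp (fun x => w x • f x) p μ} := by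
  intro f
  set s : ℕ → Set α := fun n => {x | ‖w x‖ ≤ n}
  have hs : ∀ n, MeasurableSet (s n) := fun n =>
    measurableSet_le hw.norm.measurable measurable_const
  have hf := Lp.memLp f
  have hfs : ∀ n, MemLp ((s n).indicator f) p μ := fun n => hf.indicator (hs n)
  have hmem : ∀ n, (hfs n).toLp _ ∈ {f : Lp E p μ | MemLp (fun x => w x • f x) p μ} := by
    intro n
    refine MemLp.of_le (hf.norm.const_mul (n : ℝ))
      ((hw.aestronglyMeasurable.smul (Lp.aestronglyMeasurable _))) ?_
    filter_upwards [(hfs n).coeFn_toLp] with x hx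
    rw [hx, norm_smul]
    by_cases hxs : x ∈ s n
    · rw [indicator_of_mem hxs, norm_mul, norm_norm, Real.norm_natCast]
      exact mul_le_mul_of_nonneg_right hxs (norm_nonneg _)
    · rw [indicator_of_notMem hxs, norm_zero, mul_zero]
      positivity
  have hlim : Tendsto (fun n => (hfs n).toLp _) atTop (𝓝 f) := by
    conv_rhs => rw [← Lp.toLp_coeFn f hf]
    rw [Lp.tendsto_Lp_iff_tendsto_eLpNorm'']
    refine tendsto_eLpNorm_indicator_sub_self (zero_lt_one.trans_le Fact.out).ne' hp hf hs
      (ae_of_all _ fun x => (eventually_ge_atTop ⌈‖w x‖⌉₊).mono fun n hn => Nat.ceil_le.1 hn)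
  exact mem_closure_of_tendsto hlim (Eventually.of_forall hmem)

end Truncation

noncomputable def qDiff (q : ℝ) (f : ℝ → ℂ) (t : ℝ) : ℂ :=
  Complex.I * (t : ℂ)⁻¹ * (f (q⁻¹ * t) - f (q * t))

section qDiff

variable {μ : Measure ℝ} {q c : ℝ}

theorem integral_inv_mul_comp_inv_mul_left (hc : 0 < c)
    (hμ : μ.map (c * ·) = (ENNReal.ofReal c)⁻¹ • μ) (A B : ℝ → ℂ) :
    ∫ t, (t : ℂ)⁻¹ * (A (c⁻¹ * t) * B t) ∂μ = ∫ t, (t : ℂ)⁻¹ * (A t * B (c * t)) ∂μ := by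
  have h := integral_comp_mul_left_of_map_eq hc.ne' hμ fun t => (t : ℂ)⁻¹ * (A (c⁻¹ * t) * B t)
  have hc' : (c : ℂ) ≠ 0 := by exact_mod_cast hc.ne'
  simp only [inv_mul_cancel_left₀ hc.ne', ENNReal.toReal_inv, ENNReal.toReal_ofReal hc.le,
    Complex.ofReal_mul, mul_inv, mul_assoc, integral_const_mul, Complex.real_smul,
    Complex.ofReal_inv] at h
  exact (mul_left_cancel₀ (inv_ne_zero hc') h).symm

theorem integrable_inv_mul_conj_mul {a b : ℝ → ℂ} (ha : MemLp a 2 μ)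
    (hb : MemLp (fun t : ℝ => (t : ℂ)⁻¹ * b t) 2 μ) :
    Integrable (fun t : ℝ => (t : ℂ)⁻¹ * (conj (a t) * b t)) μ :=
  (ha.star.integrable_mul hb).congr <| ae_of_all _ fun t => by
    simp only [Pi.mul_apply, Pi.star_apply, Complex.star_def]
    ring

theorem integrable_inv_mul_conj_mul' {a b : ℝ → ℂ} (ha : MemLp (fun t : ℝ => (t : ℂ)⁻¹ * a t) 2 μ)
    (hb : MemLp b 2 μ) :
    Integrable (fun t : ℝ => (t : ℂ)⁻¹ * (conj (a t) * b t)) μ :=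
  (ha.star.integrable_mul hb).congr <| ae_of_all _ fun t => by
    simp only [Pi.mul_apply, Pi.star_apply, Complex.star_def, map_mul, map_inv₀,
      Complex.conj_ofReal]
    ring

theorem integral_conj_qDiff_mul (hq : 0 < q)
    (hμ : μ.map (q * ·) = (ENNReal.ofReal q)⁻¹ • μ) {f g : ℝ → ℂ}
    (hf : MemLp f 2 μ) (hg : MemLp g 2 μ) (hf' : MemLp (fun t : ℝ => (t : ℂ)⁻¹ * f t) 2 μ)
    (hg' : MemLp (fun t : ℝ => (t : ℂ)⁻¹ * g t) 2 μ) :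
    ∫ t, conj (qDiff q f t) * g t ∂μ = ∫ t, conj (f t) * qDiff q g t ∂μ := by
  have hμ' := Measure.map_inv_mul_left_eq_of_map_mul_left_eq hq hμ
  have hr : ∀ c : ℝ, 0 < c → (ENNReal.ofReal c)⁻¹ ≠ ∞ := fun c hc => by simpa using hc
  have hfq := hf.comp_mul_left_of_map_eq hμ (hr _ hq)
  have hfq' := hf.comp_mul_left_of_map_eq hμ' (hr _ (inv_pos.2 hq))
  have hgq := hg.comp_mul_left_of_map_eq hμ (hr _ hq)
  have hgq' := hg.comp_mul_left_of_map_eq hμ' (hr _ (inv_pos.2 hq))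
  have hL : ∀ t, conj (qDiff q f t) * g t = -Complex.I *
      ((t : ℂ)⁻¹ * (conj (f (q⁻¹ * t)) * g t) - (t : ℂ)⁻¹ * (conj (f (q * t)) * g t)) := by
    intro t
    simp only [qDiff, map_mul, map_sub, map_inv₀, Complex.conj_I, Complex.conj_ofReal]
    ring
  have hR : ∀ t, conj (f t) * qDiff q g t = -Complex.I *
      ((t : ℂ)⁻¹ * (conj (f t) * g (q * t)) - (t : ℂ)⁻¹ * (conj (f t) * g (q⁻¹ * t))) := by
    intro t
    simp only [qDiff]
    ring
  simp_rw [hL, hR]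
  rw [integral_const_mul, integral_const_mul,
    integral_sub (integrable_inv_mul_conj_mul hfq' hg') (integrable_inv_mul_conj_mul hfq hg'),
    integral_sub (integrable_inv_mul_conj_mul' hf' hgq) (integrable_inv_mul_conj_mul' hf' hgq')]
  have h₁ := integral_inv_mul_comp_inv_mul_left hq hμ (fun t => conj (f t)) g
  have h₂ := integral_inv_mul_comp_inv_mul_left (inv_pos.2 hq) hμ' (fun t => conj (f t)) g
  rw [inv_inv] at h₂
  rw [h₁, h₂]

theorem qDiff_congr_ae (hq : 0 < q) (hμ : μ.map (q * ·) = (ENNReal.ofReal q)⁻¹ • μ)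
    {f g : ℝ → ℂ} (h : f =ᵐ[μ] g) : qDiff q f =ᵐ[μ] qDiff q g := by
  filter_upwards [ae_comp_mul_left_of_map_eq hμ h,
    ae_comp_mul_left_of_map_eq (Measure.map_inv_mul_left_eq_of_map_mul_left_eq hq hμ) h]
    with t h₁ h₂
  simp only [qDiff, h₁, h₂]

theorem qDiff_const_mul_comp_mul_left (a : ℂ) (hc : c ≠ 0) (f : ℝ → ℂ) (t : ℝ) :
    qDiff q (fun s => a * f (c * s)) t = c * (a * qDiff q f (c * t)) := by
  have hc' : (c : ℂ) ≠ 0 := by exact_mod_cast hc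
  simp only [qDiff, mul_left_comm c, Complex.ofReal_mul]
  field_simp

theorem MeasureTheory.MemLp.inv_mul_comp_mul_left {r : ℝ≥0∞} {p : ℝ≥0∞} (hc : c ≠ 0)
    (hμ : μ.map (c * ·) = r • μ) (hr : r ≠ ∞) {f : ℝ → ℂ}
    (hf : MemLp (fun t : ℝ => (t : ℂ)⁻¹ * f t) p μ) :
    MemLp (fun t : ℝ => (t : ℂ)⁻¹ * f (c * t)) p μ := by
  have hc' : (c : ℂ) ≠ 0 := by exact_mod_cast hc
  refine ((hf.comp_mul_left_of_map_eq hμ hr).const_mul (c : ℂ)).ae_eq (ae_of_all _ fun t => ?_)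
  simp only [Complex.ofReal_mul, mul_inv]
  field_simp

theorem memLp_inv_mul_iff_of_ae_eq {p : ℝ≥0∞} (hq : 0 < q)
    (hμ : μ.map (q * ·) = (ENNReal.ofReal q)⁻¹ • μ) {a : ℂ} (ha : a ≠ 0) {f g : ℝ → ℂ}
    (hfg : ∀ᵐ t ∂μ, g t = a * f (q * t)) :
    MemLp (fun t : ℝ => (t : ℂ)⁻¹ * g t) p μ ↔ MemLp (fun t : ℝ => (t : ℂ)⁻¹ * f t) p μ := by
  have hμ' := Measure.map_inv_mul_left_eq_of_map_mul_left_eq hq hμ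
  have hr : ∀ c : ℝ, 0 < c → (ENNReal.ofReal c)⁻¹ ≠ ∞ := fun c hc => by simpa using hc
  constructor
  · intro hg
    refine ((hg.inv_mul_comp_mul_left (inv_ne_zero hq.ne') hμ' (hr _ (inv_pos.2 hq))).const_mul
      a⁻¹).ae_eq ?_
    filter_upwards [ae_comp_mul_left_of_map_eq hμ' hfg] with t ht
    rw [ht, mul_inv_cancel_left₀ hq.ne', mul_left_comm, inv_mul_cancel_left₀ ha]
  · intro hf
    refine ((hf.inv_mul_comp_mul_left hq.ne' hμ (hr _ hq)).const_mul a).ae_eq ?_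
    filter_upwards [hfg] with t ht
    rw [ht, mul_left_comm]

end qDiff

theorem stmt_3_general (q : ℝ) (hq0 : 0 < q) (hq1 : q < 1)
    (μ₁ : Measure ℝ)
    (μ : Measure ℝ) (hμ0 : μ (Set.Ioi (0 : ℝ))ᶜ = 0)
    (hμ : ∀ M : Set ℝ, MeasurableSet M → M ⊆ Set.Ico q 1 → ∀ n : ℤ,
      μ ((fun t => q ^ n * t) '' M) = ENNReal.ofReal (q ^ n) * μ₁ M)
    (U : Lp ℂ 2 μ ≃ₗᵢ[ℂ] Lp ℂ 2 μ)
    (hU : ∀ f : Lp ℂ 2 μ, ∀ᵐ t ∂μ, (U f) t = ((q ^ ((1 : ℝ)/2) : ℝ) : ℂ) * f (q * t))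
    (X : Lp ℂ 2 μ →ₗ.[ℂ] Lp ℂ 2 μ)
    (hXdom : ∀ f : Lp ℂ 2 μ, f ∈ X.domain ↔ MemLp (fun t : ℝ => (t : ℂ)⁻¹ * f t) 2 μ)
    (hX : ∀ f : X.domain, ∀ᵐ t ∂μ,
      (X f) t = Complex.I * (t : ℂ)⁻¹ *
        ((f : Lp ℂ 2 μ) (q⁻¹ * t) - (f : Lp ℂ 2 μ) (q * t))) :
    Dense (X.domain : Set (Lp ℂ 2 μ)) ∧
    (∀ f g : X.domain, (inner ℂ (X f) (g : Lp ℂ 2 μ) : ℂ) = inner ℂ ((f : Lp ℂ 2 μ)) (X g)) ∧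
    (∀ f : Lp ℂ 2 μ, f ∈ X.domain → U f ∈ X.domain) ∧
    (∀ f : Lp ℂ 2 μ, f ∈ X.domain → U.symm f ∈ X.domain) ∧
    (∀ (f : Lp ℂ 2 μ) (hf : f ∈ X.domain) (hUf : U f ∈ X.domain),
      U.symm (X ⟨U f, hUf⟩) = (q : ℂ) • (X ⟨f, hf⟩)) := by
  have hqμ := map_mul_left_eq_of_measure_image_zpow hq0 hq1 hμ0 hμ
  have hXq : ∀ f : X.domain, X f =ᵐ[μ] qDiff q f := hX
  have ha : ((q ^ ((1 : ℝ)/2) : ℝ) : ℂ) ≠ 0 := by exact_mod_cast (Real.rpow_pos_of_pos hq0 _).ne'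
  refine ⟨?_, fun f g => ?_, fun f hf => ?_, fun f hf => ?_, fun f hf hUf => ?_⟩
  · have hD : (X.domain : Set (Lp ℂ 2 μ)) =
        {f : Lp ℂ 2 μ | MemLp (fun t : ℝ => (t : ℂ)⁻¹ • f t) 2 μ} := Set.ext hXdom
    exact hD ▸ dense_setOf_memLp_smul ENNReal.ofNat_ne_top
      Complex.measurable_ofReal.inv.stronglyMeasurable
  · simp only [L2.inner_def, RCLike.inner_apply']
    refine (integral_congr_ae ?_).trans <| (integral_conj_qDiff_mul hq0 hqμ (Lp.memLp _)
      (Lp.memLp _) ((hXdom _).1 f.2) ((hXdom _).1 g.2)).trans (integral_congr_ae ?_)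
    · filter_upwards [hXq f] with t ht
      rw [ht]
    · filter_upwards [hXq g] with t ht
      rw [ht]
  · exact (hXdom _).2 ((memLp_inv_mul_iff_of_ae_eq hq0 hqμ ha (hU f)).2 ((hXdom f).1 hf))
  · refine (hXdom _).2 ((memLp_inv_mul_iff_of_ae_eq hq0 hqμ ha ?_).1 ((hXdom f).1 hf))
    simpa only [LinearIsometryEquiv.apply_symm_apply] using hU (U.symm f)
  · rw [LinearIsometryEquiv.symm_apply_eq]
    refine Lp.ext ?_
    filter_upwards [hXq ⟨U f, hUf⟩, qDiff_congr_ae hq0 hqμ (hU f), hU ((q : ℂ) • X ⟨f, hf⟩),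
      ae_comp_mul_left_of_map_eq hqμ (hXq ⟨f, hf⟩),
      ae_comp_mul_left_of_map_eq hqμ (Lp.coeFn_smul (q : ℂ) (X ⟨f, hf⟩))] with t h₁ h₂ h₃ h₄ h₅
    rw [h₁, h₂, h₃, qDiff_const_mul_comp_mul_left _ hq0.ne', h₅, Pi.smul_apply, h₄, smul_eq_mul]
    ring

/-- The operator `X` defined by `(Xf)(t) = i t⁻¹ (f(q⁻¹t) − f(qt))` on the
domain `D(X) = {f ∈ H : t⁻¹ f(t) ∈ H}` is a symmetric operator on `H = L²(ℝ₊, μ)` (its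
domain is dense and `⟨Xf, g⟩ = ⟨f, Xg⟩` for all `f, g ∈ D(X)`); moreover the unitary `U`
maps `D(X)` onto `D(X)` and `U* X U = q X` on `D(X)`. -/
theorem stmt_3 (q : ℝ) (hq0 : 0 < q) (hq1 : q < 1)
    (μ₁ : Measure ℝ) [IsFiniteMeasure μ₁] (hμ₁ne : μ₁ ≠ 0)
    (hμ₁supp : μ₁ (Set.Ico q 1)ᶜ = 0)
    (μ : Measure ℝ) (hμ0 : μ (Set.Ioi (0 : ℝ))ᶜ = 0)
    (hμ : ∀ M : Set ℝ, MeasurableSet M → M ⊆ Set.Ico q 1 → ∀ n : ℤ,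
      μ ((fun t => q ^ n * t) '' M) = ENNReal.ofReal (q ^ n) * μ₁ M)
    (U : Lp ℂ 2 μ ≃ₗᵢ[ℂ] Lp ℂ 2 μ)
    (hU : ∀ f : Lp ℂ 2 μ, ∀ᵐ t ∂μ, (U f) t = ((q ^ ((1 : ℝ)/2) : ℝ) : ℂ) * f (q * t))
    (X : Lp ℂ 2 μ →ₗ.[ℂ] Lp ℂ 2 μ)
    (hXdom : ∀ f : Lp ℂ 2 μ, f ∈ X.domain ↔ MemLp (fun t : ℝ => (t : ℂ)⁻¹ * f t) 2 μ)
    (hX : ∀ f : X.domain, ∀ᵐ t ∂μ,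
      (X f) t = Complex.I * (t : ℂ)⁻¹ *
        ((f : Lp ℂ 2 μ) (q⁻¹ * t) - (f : Lp ℂ 2 μ) (q * t))) :
    Dense (X.domain : Set (Lp ℂ 2 μ)) ∧
    (∀ f g : X.domain, (inner ℂ (X f) (g : Lp ℂ 2 μ) : ℂ) = inner ℂ ((f : Lp ℂ 2 μ)) (X g)) ∧
    (∀ f : Lp ℂ 2 μ, f ∈ X.domain → U f ∈ X.domain) ∧
    (∀ f : Lp ℂ 2 μ, f ∈ X.domain → U.symm f ∈ X.domain) ∧
    (∀ (f : Lp ℂ 2 μ) (hf : f ∈ X.domain) (hUf : U f ∈ X.domain),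
      U.symm (X ⟨U f, hUf⟩) = (q : ℂ) • (X ⟨f, hf⟩)) :=
  stmt_3_general q hq0 hq1 μ₁ μ hμ0 hμ U hU X hXdom hX
end

section
/- For every f ∈ D₀ one has (P X f)(t) = i q^{1/2}(U*f)(t) − i q^{-1/2}(Uf)(t) and (X P f)(t) = i q^{-1/2}(U*f)(t) − i q^{1/2}(Uf)(t) μ-almost everywhere; consequently (PX − qXP)f = i(q^{3/2} − q^{-1/2}) Uf and (XP − qPX)f = −i(q^{3/2} − q^{-1/2}) U*f, so the operators P, X, U satisfy the defining relations of the q-deformed Heisenberg algebra on D₀. -/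
open MeasureTheory

/-- The operator `U`: `(Uf)(t) = q^{1/2} f(qt)`, acting on functions. -/
noncomputable def Uop (q : ℝ) (f : ℝ → ℂ) : ℝ → ℂ :=
  fun t => ((q ^ ((1 : ℝ)/2) : ℝ) : ℂ) * f (q * t)

/-- The adjoint operator `U*`: `(U*f)(t) = q^{-1/2} f(q⁻¹t)`, acting on functions. -/
noncomputable def UstarOp (q : ℝ) (f : ℝ → ℂ) : ℝ → ℂ :=
  fun t => ((q ^ (-(1 : ℝ)/2) : ℝ) : ℂ) * f (q⁻¹ * t)

/-- The operator `P`: `(Pf)(t) = t f(t)`, acting on functions. -/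
noncomputable def Pop (f : ℝ → ℂ) : ℝ → ℂ := fun t => (t : ℂ) * f t

/-- The operator `X`: `(Xf)(t) = i t⁻¹ (f(q⁻¹t) − f(qt))`, acting on functions. -/
noncomputable def Xop (q : ℝ) (f : ℝ → ℂ) : ℝ → ℂ :=
  fun t => Complex.I * (t : ℂ)⁻¹ * (f (q⁻¹ * t) - f (q * t))

/-
Every identity holds pointwise at each `t ≠ 0`, which is `μ`-almost every `t` since `μ` lives
on `(0, ∞)`. Writing `s = q^{1/2}`, so that `q = s²`, `q^{-1/2} = s⁻¹` and `q^{3/2} = s³`,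
each one becomes a polynomial identity in `s`, `s⁻¹`, `t`, `t⁻¹` and the values `f(qt)`, `f(q⁻¹t)`.
-/

open Complex

namespace Real

theorem rpow_neg_half_eq_inv_rpow_half {q : ℝ} (hq : 0 ≤ q) :
    q ^ (-(1 : ℝ) / 2) = (q ^ ((1 : ℝ) / 2))⁻¹ := by
  rw [neg_div, rpow_neg hq]

theorem rpow_half_mul_rpow_half {q : ℝ} (hq : 0 ≤ q) :
    q ^ ((1 : ℝ) / 2) * q ^ ((1 : ℝ) / 2) = q := by
  rw [← sqrt_eq_rpow, mul_self_sqrt hq]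

theorem rpow_three_halves {q : ℝ} (hq : 0 < q) :
    q ^ ((3 : ℝ) / 2) = q * q ^ ((1 : ℝ) / 2) := by
  rw [show (3 : ℝ) / 2 = 1 + 1 / 2 by norm_num, rpow_add hq, rpow_one]

end Real

theorem Complex.ofReal_eq_rpow_half_mul_rpow_half {q : ℝ} (hq : 0 ≤ q) :
    (q : ℂ) = ((q ^ ((1 : ℝ)/2) : ℝ) : ℂ) * ((q ^ ((1 : ℝ)/2) : ℝ) : ℂ) := by
  exact_mod_cast (Real.rpow_half_mul_rpow_half hq).symm

section Pointwise

variable {q : ℝ} (hq : 0 < q) (f : ℝ → ℂ) {t : ℝ} (ht : t ≠ 0)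
include hq ht

theorem Pop_Xop_apply : Pop (Xop q f) t =
    I * ((q ^ ((1 : ℝ)/2) : ℝ) : ℂ) * UstarOp q f t
      - I * ((q ^ (-(1 : ℝ)/2) : ℝ) : ℂ) * Uop q f t := by
  have hs := ofReal_ne_zero.mpr (Real.rpow_pos_of_pos hq ((1 : ℝ)/2)).ne'
  have htC : (t : ℂ) ≠ 0 := by exact_mod_cast ht
  simp only [Pop, Xop, UstarOp, Uop, Real.rpow_neg_half_eq_inv_rpow_half hq.le, ofReal_inv]
  field_simp

theorem Xop_Pop_apply : Xop q (Pop f) t =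
    I * ((q ^ (-(1 : ℝ)/2) : ℝ) : ℂ) * UstarOp q f t
      - I * ((q ^ ((1 : ℝ)/2) : ℝ) : ℂ) * Uop q f t := by
  have hs := ofReal_ne_zero.mpr (Real.rpow_pos_of_pos hq ((1 : ℝ)/2)).ne'
  have htC : (t : ℂ) ≠ 0 := by exact_mod_cast ht
  simp only [Pop, Xop, UstarOp, Uop, Real.rpow_neg_half_eq_inv_rpow_half hq.le, ofReal_inv,
    ofReal_mul]
  rw [ofReal_eq_rpow_half_mul_rpow_half hq.le]
  field_simp

theorem Pop_Xop_sub_Xop_Pop_apply : Pop (Xop q f) t - (q : ℂ) * Xop q (Pop f) t =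
    I * ((q ^ ((3 : ℝ)/2) - q ^ (-(1 : ℝ)/2) : ℝ) : ℂ) * Uop q f t := by
  have hs := ofReal_ne_zero.mpr (Real.rpow_pos_of_pos hq ((1 : ℝ)/2)).ne'
  rw [Pop_Xop_apply hq f ht, Xop_Pop_apply hq f ht]
  simp only [UstarOp, Uop, Real.rpow_three_halves hq, Real.rpow_neg_half_eq_inv_rpow_half hq.le,
    ofReal_inv, ofReal_mul, ofReal_sub]
  rw [ofReal_eq_rpow_half_mul_rpow_half hq.le]
  field_simp
  ring

theorem Xop_Pop_sub_Pop_Xop_apply : Xop q (Pop f) t - (q : ℂ) * Pop (Xop q f) t =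
    -(I * ((q ^ ((3 : ℝ)/2) - q ^ (-(1 : ℝ)/2) : ℝ) : ℂ)) * UstarOp q f t := by
  have hs := ofReal_ne_zero.mpr (Real.rpow_pos_of_pos hq ((1 : ℝ)/2)).ne'
  rw [Pop_Xop_apply hq f ht, Xop_Pop_apply hq f ht]
  simp only [UstarOp, Uop, Real.rpow_three_halves hq, Real.rpow_neg_half_eq_inv_rpow_half hq.le,
    ofReal_inv, ofReal_mul, ofReal_sub]
  rw [ofReal_eq_rpow_half_mul_rpow_half hq.le]
  field_simp
  ring

end Pointwise

theorem stmt_4_general (q : ℝ) (hq0 : 0 < q)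
    (μ : Measure ℝ) (hμ0 : μ (Set.Ioi (0 : ℝ))ᶜ = 0)
    (f : ℝ → ℂ) :
    (∀ᵐ t ∂μ, Pop (Xop q f) t =
      Complex.I * ((q ^ ((1 : ℝ)/2) : ℝ) : ℂ) * UstarOp q f t
        - Complex.I * ((q ^ (-(1 : ℝ)/2) : ℝ) : ℂ) * Uop q f t) ∧
    (∀ᵐ t ∂μ, Xop q (Pop f) t =
      Complex.I * ((q ^ (-(1 : ℝ)/2) : ℝ) : ℂ) * UstarOp q f t
        - Complex.I * ((q ^ ((1 : ℝ)/2) : ℝ) : ℂ) * Uop q f t) ∧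
    (∀ᵐ t ∂μ, Pop (Xop q f) t - (q : ℂ) * Xop q (Pop f) t =
      Complex.I * ((q ^ ((3 : ℝ)/2) - q ^ (-(1 : ℝ)/2) : ℝ) : ℂ) * Uop q f t) ∧
    (∀ᵐ t ∂μ, Xop q (Pop f) t - (q : ℂ) * Pop (Xop q f) t =
      -(Complex.I * ((q ^ ((3 : ℝ)/2) - q ^ (-(1 : ℝ)/2) : ℝ) : ℂ)) * UstarOp q f t) := by
  have hpos : ∀ᵐ t ∂μ, t ∈ Set.Ioi (0 : ℝ) := mem_ae_iff.mpr hμ0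
  have hne : ∀ᵐ t ∂μ, t ≠ 0 := hpos.mono fun _ ht => ht.ne'
  exact ⟨hne.mono fun _ => Pop_Xop_apply hq0 f, hne.mono fun _ => Xop_Pop_apply hq0 f,
    hne.mono fun _ => Pop_Xop_sub_Xop_Pop_apply hq0 f,
    hne.mono fun _ => Xop_Pop_sub_Pop_Xop_apply hq0 f⟩

/-- For every `f` in `D₀` (the square-integrable functions supported in a
compact interval `[a,b] ⊆ (0,∞)`) one has, `μ`-almost everywhere,
`(PXf)(t) = i q^{1/2}(U*f)(t) − i q^{-1/2}(Uf)(t)` and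
`(XPf)(t) = i q^{-1/2}(U*f)(t) − i q^{1/2}(Uf)(t)`; consequently
`(PX − qXP)f = i(q^{3/2} − q^{-1/2}) Uf` and `(XP − qPX)f = −i(q^{3/2} − q^{-1/2}) U*f`,
so `P, X, U` satisfy the defining relations of the `q`-deformed Heisenberg algebra on `D₀`. -/
theorem stmt_4 (q : ℝ) (hq0 : 0 < q) (hq1 : q < 1)
    (μ₁ : Measure ℝ) [IsFiniteMeasure μ₁] (hμ₁supp : μ₁ (Set.Ico q 1)ᶜ = 0)
    (μ : Measure ℝ) (hμ0 : μ (Set.Ioi (0 : ℝ))ᶜ = 0)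
    (hμ : ∀ M : Set ℝ, MeasurableSet M → M ⊆ Set.Ico q 1 → ∀ n : ℤ,
      μ ((fun t => q ^ n * t) '' M) = ENNReal.ofReal (q ^ n) * μ₁ M)
    (f : ℝ → ℂ) (hf : MemLp f 2 μ)
    (a b : ℝ) (ha : 0 < a) (hab : a ≤ b)
    (hsupp : ∀ t : ℝ, t ∉ Set.Icc a b → f t = 0) :
    (∀ᵐ t ∂μ, Pop (Xop q f) t =
      Complex.I * ((q ^ ((1 : ℝ)/2) : ℝ) : ℂ) * UstarOp q f t
        - Complex.I * ((q ^ (-(1 : ℝ)/2) : ℝ) : ℂ) * Uop q f t) ∧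
    (∀ᵐ t ∂μ, Xop q (Pop f) t =
      Complex.I * ((q ^ (-(1 : ℝ)/2) : ℝ) : ℂ) * UstarOp q f t
        - Complex.I * ((q ^ ((1 : ℝ)/2) : ℝ) : ℂ) * Uop q f t) ∧
    (∀ᵐ t ∂μ, Pop (Xop q f) t - (q : ℂ) * Xop q (Pop f) t =
      Complex.I * ((q ^ ((3 : ℝ)/2) - q ^ (-(1 : ℝ)/2) : ℝ) : ℂ) * Uop q f t) ∧
    (∀ᵐ t ∂μ, Xop q (Pop f) t - (q : ℂ) * Pop (Xop q f) t =
      -(Complex.I * ((q ^ ((3 : ℝ)/2) - q ^ (-(1 : ℝ)/2) : ℝ) : ℂ)) * UstarOp q f t) :=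
  stmt_4_general q hq0 μ hμ0 f
end

section
/- For every h ∈ 𝕳 = L²([q,1), μ₁), the functions h^e and h^o belong to D(X*), and the adjoint acts on them by: (X* h^e)(t) = −i t⁻¹ h(qt) for t ∈ [1, q⁻¹) and (X* h^e)(t) = 0 for t ∈ ℝ₊ \ [1, q⁻¹); (X* h^o)(t) = −i t⁻¹ h(t) for t ∈ [q, 1) and (X* h^o)(t) = 0 for t ∈ ℝ₊ \ [q, 1). -/
open MeasureTheory

/-- `he` is the "even extension" `h^e` of `h : [q,1) → ℂ` to `ℝ₊`, defined by
`h^e(q^{2n}t) = h(t)` for `n ∈ ℕ₀`, `t ∈ [q,1)`, and `h^e = 0` otherwise. -/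
def IsEvenExt (q : ℝ) (h he : ℝ → ℂ) : Prop :=
  (∀ n : ℕ, ∀ t ∈ Set.Ico q 1, he (q ^ (2 * n) * t) = h t) ∧
  (∀ t : ℝ, (¬ ∃ n : ℕ, ∃ s ∈ Set.Ico q 1, t = q ^ (2 * n) * s) → he t = 0)

/-- `ho` is the "odd extension" `h^o` of `h : [q,1) → ℂ` to `ℝ₊`, defined by
`h^o(q^{2n+1}t) = h(t)` for `n ∈ ℕ₀`, `t ∈ [q,1)`, and `h^o = 0` otherwise. -/
def IsOddExt (q : ℝ) (h ho : ℝ → ℂ) : Prop :=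
  (∀ n : ℕ, ∀ t ∈ Set.Ico q 1, ho (q ^ (2 * n + 1) * t) = h t) ∧
  (∀ t : ℝ, (¬ ∃ n : ℕ, ∃ s ∈ Set.Ico q 1, t = q ^ (2 * n + 1) * s) → ho t = 0)

/-!
Let `D f (t) = i t⁻¹ (f (q⁻¹ t) - f (q t))` (`qDiff q f`), the expression defining `X`.
The measure `μ` is `∑ₙ qⁿ (qⁿ ·)₊ μ₁`, so the dilation `t ↦ q t` pushes `μ` forward to `q⁻¹ μ`.
Changing variables separately in the two terms of `D` gives `⟨g, D f⟩ = ⟨D g, f⟩` whenever `g`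
and `t⁻¹ f` are square integrable; as `D(X)` is dense, every `g ∈ L²` with `D g ∈ L²` lies in
`D(X*)` and `X* g = D g`. For `g = h^e` (`c = 0`) or `g = h^o` (`c = 1`), `g (q t)` and `g (q⁻¹ t)`
agree on each `qᵐ [q, 1)` except for `m = c - 1`, where only `g (q t) = h (q^{1-c} t)` is nonzero.
This gives `D g`, and a geometric series shows that `g` and `D g` are square integrable.
-/

open Set
open scoped ENNReal ComplexConjugate

noncomputable section

namespace QDilation

section Dilation

variable {E : Type*} [NormedAddCommGroup E] {μ : Measure ℝ} {a : ℝ} {c : ℝ≥0∞}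

theorem integral_comp_mul_left_of_map_eq [NormedSpace ℝ E] (ha : a ≠ 0)
    (hμ : μ.map (a * ·) = c • μ) (φ : ℝ → E) :
    ∫ t, φ (a * t) ∂μ = c.toReal • ∫ t, φ t ∂μ := by
  rw [← (measurableEmbedding_mulLeft₀ ha).integral_map, hμ, integral_smul_measure]

theorem integral_comp_inv_mul_mul (ha : 0 < a) (hμ : μ.map (a * ·) = ENNReal.ofReal a⁻¹ • μ)
    (F G : ℝ → ℂ) : ∫ t, F (a⁻¹ * t) * G t ∂μ = a * ∫ s, F s * G (a * s) ∂μ := by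
  have := integral_comp_mul_left_of_map_eq ha.ne' hμ fun t => F (a⁻¹ * t) * G t
  simp only [inv_mul_cancel_left₀ ha.ne', ENNReal.toReal_ofReal (inv_pos.2 ha).le] at this
  rw [this, Complex.real_smul, ← mul_assoc, ← Complex.ofReal_mul, mul_inv_cancel₀ ha.ne',
    Complex.ofReal_one, one_mul]

theorem memLp_comp_mul_left_of_map_eq {p : ℝ≥0∞} (ha : a ≠ 0) (hμ : μ.map (a * ·) = c • μ)
    (hc : c ≠ ∞) {g : ℝ → E} (hg : MemLp g p μ) : MemLp (fun t => g (a * t)) p μ := by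
  refine (measurableEmbedding_mulLeft₀ ha).memLp_map_measure_iff.mp ?_
  rw [hμ]
  exact hg.smul_measure hc

theorem lintegral_enorm_rpow_le_of_ae_le {α F : Type*} [MeasurableSpace α] [NormedAddCommGroup F]
    {ν : Measure α} {f : α → E} {h : α → F} {C r : ℝ} (hr : 0 ≤ r)
    (hf : ∀ᵐ s ∂ν, ‖f s‖ ≤ C * ‖h s‖) :
    ∫⁻ s, ‖f s‖ₑ ^ r ∂ν ≤ ENNReal.ofReal C ^ r * ∫⁻ s, ‖h s‖ₑ ^ r ∂ν := by
  rw [← lintegral_const_mul' _ _ (ENNReal.rpow_ne_top_of_nonneg hr ENNReal.ofReal_ne_top)]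
  refine lintegral_mono_ae (hf.mono fun s hs => ?_)
  rw [← ENNReal.mul_rpow_of_nonneg _ _ hr, ← ofReal_norm, ← ofReal_norm,
    ← ENNReal.ofReal_mul' (norm_nonneg _)]
  exact ENNReal.rpow_le_rpow (ENNReal.ofReal_le_ofReal hs) hr

end Dilation

def qDiff (q : ℝ) (f : ℝ → ℂ) (t : ℝ) : ℂ :=
  Complex.I * (t : ℂ)⁻¹ * (f (q⁻¹ * t) - f (q * t))

section QDiff

variable {q : ℝ} {μ : Measure ℝ}

theorem integral_inner_qDiff_comm (hq : 0 < q)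
    (hμq : μ.map (q * ·) = ENNReal.ofReal q⁻¹ • μ)
    (hμq' : μ.map (q⁻¹ * ·) = ENNReal.ofReal q • μ)
    {f g : ℝ → ℂ} (hg : MemLp g 2 μ) (hf : MemLp (fun t : ℝ => (t : ℂ)⁻¹ * f t) 2 μ) :
    ∫ t, inner ℂ (g t) (qDiff q f t) ∂μ = ∫ t, inner ℂ (qDiff q g t) (f t) ∂μ := by
  set u : ℝ → ℂ := fun t => (t : ℂ)⁻¹ * f t
  have hq0 : (q : ℂ) ≠ 0 := by exact_mod_cast hq.ne'
  have huP := memLp_comp_mul_left_of_map_eq hq.ne' hμq ENNReal.ofReal_ne_top hf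
  have huM := memLp_comp_mul_left_of_map_eq (inv_ne_zero hq.ne') hμq' ENNReal.ofReal_ne_top hf
  have hgP := memLp_comp_mul_left_of_map_eq hq.ne' hμq ENNReal.ofReal_ne_top hg
  have hgM := memLp_comp_mul_left_of_map_eq (inv_ne_zero hq.ne') hμq' ENNReal.ofReal_ne_top hg
  have hlhs : ∀ t, inner ℂ (g t) (qDiff q f t) =
      Complex.I * q⁻¹ * (u (q⁻¹ * t) * conj (g t)) - Complex.I * q * (u (q * t) * conj (g t)) := by
    intro t
    simp only [u, qDiff, RCLike.inner_apply, Complex.ofReal_mul, Complex.ofReal_inv, mul_inv,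
      inv_inv]
    field_simp
  have hrhs : ∀ t, inner ℂ (qDiff q g t) (f t) =
      Complex.I * (u t * conj (g (q * t))) - Complex.I * (u t * conj (g (q⁻¹ * t))) := by
    intro t
    simp only [u, qDiff, RCLike.inner_apply, map_mul, map_sub, map_inv₀, Complex.conj_I,
      Complex.conj_ofReal]
    ring
  have hP := integral_comp_inv_mul_mul hq hμq u fun t => conj (g t)
  have hM := integral_comp_inv_mul_mul (inv_pos.2 hq) (by rwa [inv_inv]) u fun t => conj (g t)
  rw [inv_inv] at hM
  simp only [hlhs, hrhs]
  rw [integral_sub, integral_sub, integral_const_mul, integral_const_mul, integral_const_mul,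
    integral_const_mul, hP, hM]
  · rw [Complex.ofReal_inv]
    field_simp
  · exact (hf.integrable_mul hgP.star).const_mul _
  · exact (hf.integrable_mul hgM.star).const_mul _
  · exact (huM.integrable_mul hg.star).const_mul _
  · exact (huP.integrable_mul hg.star).const_mul _

theorem exists_mem_adjoint_domain_of_memLp_qDiff (hq : 0 < q)
    (hμq : μ.map (q * ·) = ENNReal.ofReal q⁻¹ • μ)
    (hμq' : μ.map (q⁻¹ * ·) = ENNReal.ofReal q • μ)
    {X : Lp ℂ 2 μ →ₗ.[ℂ] Lp ℂ 2 μ} (hdense : Dense (X.domain : Set (Lp ℂ 2 μ)))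
    (hXdom : ∀ f : X.domain, MemLp (fun t : ℝ => (t : ℂ)⁻¹ * (f : Lp ℂ 2 μ) t) 2 μ)
    (hX : ∀ f : X.domain, X f =ᵐ[μ] qDiff q (f : Lp ℂ 2 μ))
    {g : ℝ → ℂ} (hg : MemLp g 2 μ) (hDg : MemLp (qDiff q g) 2 μ) :
    ∃ hmem : hg.toLp g ∈ X.adjoint.domain, X.adjoint ⟨_, hmem⟩ =ᵐ[μ] qDiff q g := by
  have hpair : ∀ f : X.domain,
      inner ℂ (hDg.toLp (qDiff q g)) (f : Lp ℂ 2 μ) = inner ℂ (hg.toLp g) (X f) := by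
    intro f
    rw [L2.inner_def, L2.inner_def]
    calc ∫ t, inner ℂ (hDg.toLp (qDiff q g) t) ((f : Lp ℂ 2 μ) t) ∂μ
        = ∫ t, inner ℂ (qDiff q g t) ((f : Lp ℂ 2 μ) t) ∂μ :=
          integral_congr_ae (hDg.coeFn_toLp.mono fun t ht => by simp only [ht])
      _ = ∫ t, inner ℂ (g t) (qDiff q (f : Lp ℂ 2 μ) t) ∂μ :=
          (integral_inner_qDiff_comm hq hμq hμq' hg (hXdom f)).symm
      _ = ∫ t, inner ℂ (hg.toLp g t) (X f t) ∂μ :=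
          integral_congr_ae ((hg.coeFn_toLp.and (hX f)).mono fun t ht => by simp only [ht.1, ht.2])
  have hmem := LinearPMap.mem_adjoint_domain_of_exists _ ⟨_, hpair⟩
  refine ⟨hmem, ?_⟩
  rw [LinearPMap.adjoint_apply_eq hdense ⟨_, hmem⟩ hpair]
  exact hDg.coeFn_toLp

end QDiff

section Density

variable {μ : Measure ℝ} {D : Submodule ℂ (Lp ℂ 2 μ)}

theorem indicator_compl_ball_ae_eq_zero_of_mem_orthogonal
    (hD : ∀ f : Lp ℂ 2 μ, MemLp (fun t : ℝ => (t : ℂ)⁻¹ * f t) 2 μ → f ∈ D)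
    {g : Lp ℂ 2 μ} (hg : g ∈ Dᗮ) {r : ℝ} (hr : 0 < r) :
    (Metric.ball 0 r)ᶜ.indicator g =ᵐ[μ] 0 := by
  set A := (Metric.ball (0 : ℝ) r)ᶜ
  have hgA : MemLp (A.indicator g) 2 μ := (Lp.memLp g).indicator measurableSet_ball.compl
  have hmem : hgA.toLp _ ∈ D := by
    refine hD _ (MemLp.of_le_mul (c := r⁻¹) hgA ?_ ?_)
    · exact (Complex.measurable_ofReal.inv.aestronglyMeasurable).mul (Lp.aestronglyMeasurable _)
    · filter_upwards [hgA.coeFn_toLp] with t ht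
      rw [ht, norm_mul]
      by_cases htA : t ∈ A
      · refine mul_le_mul_of_nonneg_right ?_ (norm_nonneg _)
        have : r ≤ |t| := by simpa [A] using htA
        rw [norm_inv, Complex.norm_real, Real.norm_eq_abs]
        exact inv_anti₀ hr this
      · simp [htA]
  -- `g ⊥ 1_A g` and `⟨1_A g, g⟩ = ‖1_A g‖²`
  have horth : inner ℂ (hgA.toLp _) (hgA.toLp _) = 0 := by
    rw [← (Submodule.mem_orthogonal _ _).mp hg _ hmem, L2.inner_def, L2.inner_def]
    refine integral_congr_ae (hgA.coeFn_toLp.mono fun t ht => ?_)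
    simp only [ht]
    by_cases htA : t ∈ A <;> simp [htA]
  rw [inner_self_eq_zero] at horth
  have h := hgA.coeFn_toLp
  rw [horth] at h
  exact h.symm.trans (Lp.coeFn_zero _ _ _)

theorem dense_of_memLp_inv_mul (hμ0 : μ {0} = 0)
    (hD : ∀ f : Lp ℂ 2 μ, MemLp (fun t : ℝ => (t : ℂ)⁻¹ * f t) 2 μ → f ∈ D) :
    Dense (D : Set (Lp ℂ 2 μ)) := by
  rw [Submodule.dense_iff_topologicalClosure_eq_top, Submodule.topologicalClosure_eq_top_iff,
    Submodule.eq_bot_iff]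
  intro g hg
  have htrunc : ∀ N : ℕ, (Metric.ball 0 (1 / ((N : ℝ) + 1)))ᶜ.indicator g =ᵐ[μ] 0 :=
    fun N => indicator_compl_ball_ae_eq_zero_of_mem_orthogonal hD hg Nat.one_div_pos_of_nat
  refine Lp.eq_zero_iff_ae_eq_zero.2 ?_
  filter_upwards [measure_eq_zero_iff_ae_notMem.mp hμ0, ae_all_iff.2 htrunc] with t ht0 ht
  obtain ⟨N, hN⟩ := exists_nat_one_div_lt (abs_pos.2 ht0)
  have htA : t ∈ (Metric.ball 0 (1 / ((N : ℝ) + 1)))ᶜ := by simpa using hN.le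
  have := ht N
  rwa [Set.indicator_of_mem htA] at this

end Density

section Piece

variable {q : ℝ}

def piece (q : ℝ) (n : ℤ) : Set ℝ := Ico (q ^ (n + 1)) (q ^ n)

theorem image_mul_Ico_eq_piece (hq : 0 < q) (n : ℤ) :
    (q ^ n * ·) '' Ico q 1 = piece q n := by
  rw [image_mul_left_Ico (zpow_pos hq n), ← zpow_add_one₀ hq.ne', mul_one, piece]

theorem zpow_mul_mem_piece (hq : 0 < q) (n : ℤ) {s : ℝ} (hs : s ∈ Ico q 1) :
    q ^ n * s ∈ piece q n :=
  image_mul_Ico_eq_piece hq n ▸ mem_image_of_mem _ hs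

theorem eq_of_mem_piece (hq0 : 0 < q) (hq1 : q < 1) {m n : ℤ} {t : ℝ}
    (hm : t ∈ piece q m) (hn : t ∈ piece q n) : m = n := by
  have anti := zpow_right_strictAnti₀ hq0 hq1
  have h1 : m < n + 1 := anti.lt_iff_gt.1 (hn.1.trans_lt hm.2)
  have h2 : n < m + 1 := anti.lt_iff_gt.1 (hm.1.trans_lt hn.2)
  omega

theorem pairwise_disjoint_piece (hq0 : 0 < q) (hq1 : q < 1) :
    Pairwise (Function.onFun Disjoint (piece q)) := fun _ _ hmn =>
  disjoint_left.2 fun _ hm hn => hmn (eq_of_mem_piece hq0 hq1 hm hn)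

theorem zpow_mul_mem_piece_iff (hq0 : 0 < q) (hq1 : q < 1) {m n : ℤ} {s : ℝ}
    (hs : s ∈ Ico q 1) : q ^ m * s ∈ piece q n ↔ m = n :=
  ⟨fun h => eq_of_mem_piece hq0 hq1 (zpow_mul_mem_piece hq0 m hs) h,
    fun h => h ▸ zpow_mul_mem_piece hq0 m hs⟩

theorem iUnion_piece (hq0 : 0 < q) (hq1 : q < 1) : ⋃ n, piece q n = Ioi 0 := by
  refine Subset.antisymm (iUnion_subset fun n t ht => (zpow_pos hq0 _).trans_le ht.1) ?_
  intro t ht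
  obtain ⟨n, hn⟩ := exists_mem_Ico_zpow ht (one_lt_inv₀ hq0 |>.2 hq1)
  refine mem_iUnion.2 ⟨-(n + 1), ?_⟩
  rwa [piece, show -(n + 1) + 1 = -n by ring, zpow_neg, zpow_neg, ← inv_zpow, ← inv_zpow]

theorem exists_zpow_mul_eq (hq0 : 0 < q) (hq1 : q < 1) {t : ℝ} (ht : 0 < t) :
    ∃ n : ℤ, ∃ s ∈ Ico q 1, q ^ n * s = t := by
  obtain ⟨n, hn⟩ := mem_iUnion.1 ((iUnion_piece hq0 hq1).symm ▸ ht : t ∈ ⋃ n, piece q n)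
  rw [← image_mul_Ico_eq_piece hq0] at hn
  exact ⟨n, hn⟩

end Piece

def dilationSum (q : ℝ) (μ₁ : Measure ℝ) : Measure ℝ :=
  Measure.sum fun n : ℤ => ENNReal.ofReal (q ^ n) • μ₁.map (q ^ n * ·)

section DilationSum

variable {q : ℝ} {μ₁ : Measure ℝ}

theorem map_dilationSum (hq : 0 < q) (m : ℤ) :
    (dilationSum q μ₁).map (q ^ m * ·) = ENNReal.ofReal (q ^ (-m)) • dilationSum q μ₁ := by
  ext A hA
  have hmul : ∀ k : ℤ, Measurable (q ^ k * · : ℝ → ℝ) := fun k => measurable_const_mul _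
  rw [Measure.map_apply (hmul m) hA, Measure.smul_apply, dilationSum,
    Measure.sum_apply _ (hmul m hA), Measure.sum_apply _ hA, smul_eq_mul,
    ← ENNReal.tsum_mul_left, ← (Equiv.subRight m).tsum_eq]
  refine tsum_congr fun n => ?_
  simp only [Equiv.subRight_apply, Measure.smul_apply, Measure.map_apply (hmul _) (hmul m hA),
    Measure.map_apply (hmul _) hA, smul_eq_mul, ← mul_assoc, preimage_preimage]
  have e1 : q ^ (-m) * q ^ n = q ^ (n - m) := by rw [← zpow_add₀ hq.ne', neg_add_eq_sub]
  have e2 : q ^ m * q ^ (n - m) = q ^ n := by rw [← zpow_add₀ hq.ne', add_sub_cancel]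
  rw [← ENNReal.ofReal_mul (zpow_pos hq _).le, e1, e2]

theorem map_mul_dilationSum (hq : 0 < q) :
    (dilationSum q μ₁).map (q * ·) = ENNReal.ofReal q⁻¹ • dilationSum q μ₁ := by
  simpa using map_dilationSum (μ₁ := μ₁) hq 1

theorem map_inv_mul_dilationSum (hq : 0 < q) :
    (dilationSum q μ₁).map (q⁻¹ * ·) = ENNReal.ofReal q • dilationSum q μ₁ := by
  simpa using map_dilationSum (μ₁ := μ₁) hq (-1)

theorem lintegral_dilationSum (hq : 0 < q) (φ : ℝ → ℝ≥0∞) :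
    ∫⁻ t, φ t ∂dilationSum q μ₁ = ∑' n : ℤ, ENNReal.ofReal (q ^ n) * ∫⁻ s, φ (q ^ n * s) ∂μ₁ := by
  rw [dilationSum, lintegral_sum_measure]
  refine tsum_congr fun n => ?_
  rw [lintegral_smul_measure, (measurableEmbedding_mulLeft₀ (zpow_ne_zero n hq.ne')).lintegral_map,
    smul_eq_mul]

theorem aestronglyMeasurable_dilationSum {E : Type*} [NormedAddCommGroup E] (hq : 0 < q)
    {g : ℝ → E} (hg : ∀ n : ℤ, AEStronglyMeasurable (fun s => g (q ^ n * s)) μ₁) :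
    AEStronglyMeasurable g (dilationSum q μ₁) :=
  aestronglyMeasurable_sum_measure_iff.2 fun n =>
    ((measurableEmbedding_mulLeft₀ (zpow_ne_zero n hq.ne')).aestronglyMeasurable_map_iff.2
      (hg n)).smul_measure _

theorem tsum_ite_ofReal_zpow_ne_top (hq0 : 0 < q) (hq1 : q < 1) (c : ℤ) :
    ∑' n : ℤ, (if c ≤ n then ENNReal.ofReal (q ^ n) else 0) ≠ ∞ := by
  have hsupp : Function.support (fun n : ℤ => if c ≤ n then ENNReal.ofReal (q ^ n) else 0) ⊆
      range (fun k : ℕ => c + k) := by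
    intro n hn
    have : c ≤ n := by by_contra h; simp [h] at hn
    exact ⟨(n - c).toNat, by simp [Int.toNat_of_nonneg (sub_nonneg.2 this)]⟩
  rw [← (add_right_injective c).comp Nat.cast_injective |>.tsum_eq hsupp]
  have hterm : ∀ k : ℕ,
      ENNReal.ofReal (q ^ (c + k)) = ENNReal.ofReal (q ^ c) * ENNReal.ofReal q ^ k := by
    intro k
    rw [zpow_add₀ hq0.ne', zpow_natCast, ENNReal.ofReal_mul (zpow_pos hq0 c).le,
      ENNReal.ofReal_pow hq0.le]
  simp only [Function.comp_apply, le_add_iff_nonneg_right, Nat.cast_nonneg, if_true, hterm,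
    ENNReal.tsum_mul_left, ENNReal.tsum_geometric]
  refine ENNReal.mul_ne_top ENNReal.ofReal_ne_top (ENNReal.inv_ne_top.2 ?_)
  exact (tsub_pos_of_lt (ENNReal.ofReal_lt_one.2 hq1)).ne'

theorem memLp_dilationSum {E F : Type*} [NormedAddCommGroup E] [NormedAddCommGroup F]
    (hq0 : 0 < q) (hq1 : q < 1) {p : ℝ≥0∞} (hp0 : p ≠ 0) (hp : p ≠ ∞)
    {h : ℝ → F} (hh : MemLp h p μ₁) {g : ℝ → E} (hgm : AEStronglyMeasurable g (dilationSum q μ₁))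
    {c : ℤ} {C : ℝ} (hg : ∀ n : ℤ, ∀ᵐ s ∂μ₁, ‖g (q ^ n * s)‖ ≤ if c ≤ n then C * ‖h s‖ else 0) :
    MemLp g p (dilationSum q μ₁) := by
  refine ⟨hgm, ?_⟩
  have hr : 0 < p.toReal := ENNReal.toReal_pos hp0 hp
  set K := ENNReal.ofReal C ^ p.toReal * ∫⁻ s, ‖h s‖ₑ ^ p.toReal ∂μ₁
  have hK : K ≠ ∞ := ENNReal.mul_ne_top (ENNReal.rpow_ne_top_of_nonneg hr.le ENNReal.ofReal_ne_top)
    ((eLpNorm_lt_top_iff_lintegral_rpow_enorm_lt_top hp0 hp).1 hh.2).ne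
  have hterm : ∀ n : ℤ, ∫⁻ s, ‖g (q ^ n * s)‖ₑ ^ p.toReal ∂μ₁ ≤ if c ≤ n then K else 0 := by
    intro n
    split_ifs with hn
    · exact lintegral_enorm_rpow_le_of_ae_le hr.le
        ((hg n).mono fun s hs => by rwa [if_pos hn] at hs)
    · refine (lintegral_congr_ae (g := fun _ => 0) ((hg n).mono fun s hs => ?_)).trans_le
        lintegral_zero.le
      rw [if_neg hn] at hs
      simp [norm_le_zero_iff.1 hs, ENNReal.zero_rpow_of_pos hr]
  rw [eLpNorm_lt_top_iff_lintegral_rpow_enorm_lt_top hp0 hp, lintegral_dilationSum hq0]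
  calc ∑' n : ℤ, ENNReal.ofReal (q ^ n) * ∫⁻ s, ‖g (q ^ n * s)‖ₑ ^ p.toReal ∂μ₁
      ≤ ∑' n : ℤ, (if c ≤ n then ENNReal.ofReal (q ^ n) else 0) * K := by
        refine ENNReal.tsum_le_tsum fun n => ?_
        have hn' := hterm n
        split_ifs at hn' ⊢
        · gcongr
        · simp [nonpos_iff_eq_zero.1 hn']
    _ < ∞ := by
        rw [ENNReal.tsum_mul_right]
        exact ENNReal.mul_lt_top (tsum_ite_ofReal_zpow_ne_top hq0 hq1 c).lt_top hK.lt_top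

end DilationSum

section Identification

variable {q : ℝ} {μ₁ μ : Measure ℝ}

theorem restrict_piece_eq (hq : 0 < q) (hμ₁ : μ₁ (Ico q 1)ᶜ = 0)
    (hμ : ∀ M : Set ℝ, MeasurableSet M → M ⊆ Ico q 1 → ∀ n : ℤ,
      μ ((fun t => q ^ n * t) '' M) = ENNReal.ofReal (q ^ n) * μ₁ M) (n : ℤ) :
    μ.restrict (piece q n) = ENNReal.ofReal (q ^ n) • μ₁.map (q ^ n * ·) := by
  ext A hA
  have hmeas : Measurable (q ^ n * · : ℝ → ℝ) := measurable_const_mul _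
  rw [Measure.restrict_apply hA, Measure.smul_apply, Measure.map_apply hmeas hA, smul_eq_mul,
    ← measure_inter_conull hμ₁, ← hμ _ ((hmeas hA).inter measurableSet_Ico) inter_subset_right,
    inter_comm _ (Ico q 1), image_inter_preimage, image_mul_Ico_eq_piece hq, inter_comm]

theorem eq_dilationSum (hq0 : 0 < q) (hq1 : q < 1) (hμ₁ : μ₁ (Ico q 1)ᶜ = 0)
    (hμ0 : μ (Ioi 0)ᶜ = 0)
    (hμ : ∀ M : Set ℝ, MeasurableSet M → M ⊆ Ico q 1 → ∀ n : ℤ,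
      μ ((fun t => q ^ n * t) '' M) = ENNReal.ofReal (q ^ n) * μ₁ M) :
    μ = dilationSum q μ₁ := by
  have hae : ∀ᵐ t ∂μ, t ∈ ⋃ n, piece q n := by
    rw [iUnion_piece hq0 hq1]
    exact mem_ae_iff.2 hμ0
  rw [← Measure.restrict_eq_self_of_ae_mem hae,
    Measure.restrict_iUnion (pairwise_disjoint_piece hq0 hq1) fun _ => measurableSet_Ico]
  exact congrArg Measure.sum (funext (restrict_piece_eq hq0 hμ₁ hμ))

end Identification

section Extension

variable {q : ℝ} {μ₁ : Measure ℝ} {c : ℤ} {g h : ℝ → ℂ}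

theorem zpow_mul_apply_of_ext (hq0 : 0 < q) (hq1 : q < 1) {c : ℕ}
    (hg₁ : ∀ k : ℕ, ∀ s ∈ Ico q 1, g (q ^ (2 * k + c) * s) = h s)
    (hg₀ : ∀ t : ℝ, (¬ ∃ k : ℕ, ∃ s ∈ Ico q 1, t = q ^ (2 * k + c) * s) → g t = 0)
    (n : ℤ) {s : ℝ} (hs : s ∈ Ico q 1) :
    g (q ^ n * s) = if (c : ℤ) ≤ n ∧ Even (n - c) then h s else 0 := by
  split_ifs with hn
  · obtain ⟨r, hr⟩ := hn.2
    have : n = ((2 * r.toNat + c : ℕ) : ℤ) := by push_cast; omega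
    rw [this, zpow_natCast, hg₁ _ s hs]
  · refine hg₀ _ fun ⟨k, s', hs', heq⟩ => hn ?_
    have hmem : q ^ n * s ∈ piece q ((2 * k + c : ℕ) : ℤ) := by
      rw [heq, ← zpow_natCast]
      exact zpow_mul_mem_piece hq0 _ hs'
    rw [zpow_mul_mem_piece_iff hq0 hq1 hs] at hmem
    exact ⟨by omega, k, by omega⟩

variable (hg : ∀ n : ℤ, ∀ s ∈ Ico q 1, g (q ^ n * s) = if c ≤ n ∧ Even (n - c) then h s else 0)
include hg

theorem qDiff_zpow_mul_of_ext (hq0 : 0 < q) (n : ℤ) {s : ℝ} (hs : s ∈ Ico q 1) :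
    qDiff q g (q ^ n * s) =
      if n = c - 1 then -Complex.I * ((q ^ n * s : ℝ) : ℂ)⁻¹ * h s else 0 := by
  have e₁ : q⁻¹ * (q ^ n * s) = q ^ (n - 1) * s := by
    rw [← mul_assoc, ← zpow_neg_one, ← zpow_add₀ hq0.ne', neg_add_eq_sub]
  have e₂ : q * (q ^ n * s) = q ^ (n + 1) * s := by
    rw [← mul_assoc, zpow_add_one₀ hq0.ne', mul_comm q]
  simp only [qDiff, e₁, e₂, hg _ s hs, Int.even_iff]
  split_ifs <;> first | ring1 | (exfalso; omega)

theorem qDiff_of_ext (hq0 : 0 < q) (hq1 : q < 1) {t : ℝ} (ht : 0 < t) :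
    qDiff q g t =
      if q ^ c ≤ t ∧ t < q ^ (c - 1) then -Complex.I * (t : ℂ)⁻¹ * h (q ^ (1 - c) * t)
      else 0 := by
  obtain ⟨n, s, hs, rfl⟩ := exists_zpow_mul_eq hq0 hq1 ht
  have hmem := zpow_mul_mem_piece_iff hq0 hq1 (m := n) (n := c - 1) hs
  rw [piece, sub_add_cancel, mem_Ico] at hmem
  rw [qDiff_zpow_mul_of_ext hg hq0 n hs]
  by_cases hn : n = c - 1
  · rw [if_pos hn, if_pos (hmem.2 hn), hn, ← mul_assoc, ← zpow_add₀ hq0.ne',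
      sub_add_sub_cancel', sub_self, zpow_zero, one_mul]
  · rw [if_neg hn, if_neg (mt hmem.1 hn)]

theorem memLp_of_ext (hq0 : 0 < q) (hq1 : q < 1) (hμ₁ : μ₁ (Ico q 1)ᶜ = 0)
    (hh : MemLp h 2 μ₁) : MemLp g 2 (dilationSum q μ₁) := by
  have hIco : ∀ᵐ s ∂μ₁, s ∈ Ico q 1 := mem_ae_iff.2 hμ₁
  refine memLp_dilationSum hq0 hq1 two_ne_zero ENNReal.ofNat_ne_top hh
    (aestronglyMeasurable_dilationSum hq0 fun n => ?_) (c := c) (C := 1) fun n => ?_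
  · by_cases hn : c ≤ n ∧ Even (n - c)
    · exact hh.1.congr (hIco.mono fun s hs => ((hg n s hs).trans (if_pos hn)).symm)
    · exact aestronglyMeasurable_const.congr
        (hIco.mono fun s hs => ((hg n s hs).trans (if_neg hn)).symm)
  · filter_upwards [hIco] with s hs
    rw [hg n s hs]
    split_ifs <;> simp_all

theorem memLp_qDiff_of_ext (hq0 : 0 < q) (hq1 : q < 1) (hμ₁ : μ₁ (Ico q 1)ᶜ = 0)
    (hh : MemLp h 2 μ₁) : MemLp (qDiff q g) 2 (dilationSum q μ₁) := by
  have hIco : ∀ᵐ s ∂μ₁, s ∈ Ico q 1 := mem_ae_iff.2 hμ₁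
  refine memLp_dilationSum hq0 hq1 two_ne_zero ENNReal.ofNat_ne_top hh
    (aestronglyMeasurable_dilationSum hq0 fun n => ?_) (c := c - 1) (C := (q ^ c)⁻¹) fun n => ?_
  · by_cases hn : n = c - 1
    · refine ((aestronglyMeasurable_const (b := -Complex.I)).mul (by fun_prop :
        Measurable fun s : ℝ => ((q ^ n * s : ℝ) : ℂ)⁻¹).aestronglyMeasurable |>.mul hh.1).congr
        (hIco.mono fun s hs => ?_)
      exact ((qDiff_zpow_mul_of_ext hg hq0 n hs).trans (if_pos hn)).symm
    · exact aestronglyMeasurable_const.congr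
        (hIco.mono fun s hs => ((qDiff_zpow_mul_of_ext hg hq0 n hs).trans (if_neg hn)).symm)
  · filter_upwards [hIco] with s hs
    rw [qDiff_zpow_mul_of_ext hg hq0 n hs]
    split_ifs with hn hn'
    · have hpos : 0 < q ^ n * s := mul_pos (zpow_pos hq0 n) (hq0.trans_le hs.1)
      have hle : q ^ c ≤ q ^ n * s :=
        calc q ^ c = q ^ n * q := by rw [hn, ← zpow_add_one₀ hq0.ne', sub_add_cancel]
          _ ≤ q ^ n * s := mul_le_mul_of_nonneg_left hs.1 (zpow_pos hq0 n).le
      rw [norm_mul, norm_mul, norm_neg, Complex.norm_I, one_mul, norm_inv, Complex.norm_real,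
        Real.norm_of_nonneg hpos.le]
      exact mul_le_mul_of_nonneg_right (inv_anti₀ (zpow_pos hq0 c) hle) (norm_nonneg _)
    · omega
    · simp only [norm_zero]; positivity
    · simp

end Extension

theorem exists_adjoint_of_ext {q : ℝ} (hq0 : 0 < q) (hq1 : q < 1)
    {μ₁ : Measure ℝ} (hμ₁supp : μ₁ (Ico q 1)ᶜ = 0)
    {μ : Measure ℝ} (hμ0 : μ (Ioi 0)ᶜ = 0)
    (hμ : ∀ M : Set ℝ, MeasurableSet M → M ⊆ Ico q 1 → ∀ n : ℤ,
      μ ((fun t => q ^ n * t) '' M) = ENNReal.ofReal (q ^ n) * μ₁ M)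
    {X : Lp ℂ 2 μ →ₗ.[ℂ] Lp ℂ 2 μ}
    (hXdom : ∀ f : Lp ℂ 2 μ, f ∈ X.domain ↔ MemLp (fun t : ℝ => (t : ℂ)⁻¹ * f t) 2 μ)
    (hX : ∀ f : X.domain, X f =ᵐ[μ] qDiff q (f : Lp ℂ 2 μ))
    {h : ℝ → ℂ} (hh : MemLp h 2 μ₁) {c : ℤ} {g : ℝ → ℂ}
    (hg : ∀ n : ℤ, ∀ s ∈ Ico q 1, g (q ^ n * s) = if c ≤ n ∧ Even (n - c) then h s else 0) :
    ∃ G : Lp ℂ 2 μ, (∀ᵐ t ∂μ, G t = g t) ∧ ∃ hmem : G ∈ X.adjoint.domain,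
      ∀ᵐ t ∂μ, (X.adjoint ⟨G, hmem⟩) t =
        if q ^ c ≤ t ∧ t < q ^ (c - 1) then -Complex.I * (t : ℂ)⁻¹ * h (q ^ (1 - c) * t)
        else 0 := by
  obtain rfl : μ = dilationSum q μ₁ := eq_dilationSum hq0 hq1 hμ₁supp hμ0 hμ
  have hdense := dense_of_memLp_inv_mul (D := X.domain) (measure_mono_null (by simp) hμ0)
    fun f hf => (hXdom f).2 hf
  have hgL := memLp_of_ext hg hq0 hq1 hμ₁supp hh
  obtain ⟨hmem, hXg⟩ := exists_mem_adjoint_domain_of_memLp_qDiff hq0 (map_mul_dilationSum hq0)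
    (map_inv_mul_dilationSum hq0) hdense (fun f => (hXdom f).1 f.2) hX hgL
    (memLp_qDiff_of_ext hg hq0 hq1 hμ₁supp hh)
  refine ⟨_, hgL.coeFn_toLp, hmem, ?_⟩
  filter_upwards [hXg, mem_ae_iff.2 hμ0] with t ht htpos
  rw [ht, qDiff_of_ext hg hq0 hq1 htpos]

end QDilation

end

theorem stmt_5_general (q : ℝ) (hq0 : 0 < q) (hq1 : q < 1)
    (μ₁ : Measure ℝ) (hμ₁supp : μ₁ (Set.Ico q 1)ᶜ = 0)
    (μ : Measure ℝ) (hμ0 : μ (Set.Ioi (0 : ℝ))ᶜ = 0)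
    (hμ : ∀ M : Set ℝ, MeasurableSet M → M ⊆ Set.Ico q 1 → ∀ n : ℤ,
      μ ((fun t => q ^ n * t) '' M) = ENNReal.ofReal (q ^ n) * μ₁ M)
    (X : Lp ℂ 2 μ →ₗ.[ℂ] Lp ℂ 2 μ)
    (hXdom : ∀ f : Lp ℂ 2 μ, f ∈ X.domain ↔ MemLp (fun t : ℝ => (t : ℂ)⁻¹ * f t) 2 μ)
    (hX : ∀ f : X.domain, ∀ᵐ t ∂μ,
      (X f) t = Complex.I * (t : ℂ)⁻¹ *
        ((f : Lp ℂ 2 μ) (q⁻¹ * t) - (f : Lp ℂ 2 μ) (q * t)))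
    (h : ℝ → ℂ) (hh : MemLp h 2 μ₁)
    (he ho : ℝ → ℂ) (hhe : IsEvenExt q h he) (hho : IsOddExt q h ho) :
    (∃ ge : Lp ℂ 2 μ, (∀ᵐ t ∂μ, ge t = he t) ∧
      ∃ hmem : ge ∈ X.adjoint.domain,
        ∀ᵐ t ∂μ, (X.adjoint ⟨ge, hmem⟩) t =
          if 1 ≤ t ∧ t < q⁻¹ then -Complex.I * (t : ℂ)⁻¹ * h (q * t) else 0) ∧
    (∃ go : Lp ℂ 2 μ, (∀ᵐ t ∂μ, go t = ho t) ∧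
      ∃ hmem : go ∈ X.adjoint.domain,
        ∀ᵐ t ∂μ, (X.adjoint ⟨go, hmem⟩) t =
          if q ≤ t ∧ t < 1 then -Complex.I * (t : ℂ)⁻¹ * h t else 0) := by
  have hge := QDilation.zpow_mul_apply_of_ext hq0 hq1 (c := 0)
    (by simpa using hhe.1) (by simpa using hhe.2)
  have hgo := QDilation.zpow_mul_apply_of_ext hq0 hq1 (c := 1) hho.1 hho.2
  constructor
  · simpa using QDilation.exists_adjoint_of_ext hq0 hq1 hμ₁supp hμ0 hμ hXdom hX hh hge
  · simpa using QDilation.exists_adjoint_of_ext hq0 hq1 hμ₁supp hμ0 hμ hXdom hX hh hgo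

/-- For every `h ∈ 𝕳 = L²([q,1), μ₁)`, the functions `h^e` and `h^o`
belong to `D(X*)`, and `(X* h^e)(t) = −i t⁻¹ h(qt)` on `[1, q⁻¹)`, `= 0` elsewhere on `ℝ₊`,
while `(X* h^o)(t) = −i t⁻¹ h(t)` on `[q, 1)`, `= 0` elsewhere on `ℝ₊`. -/
theorem stmt_5 (q : ℝ) (hq0 : 0 < q) (hq1 : q < 1)
    (μ₁ : Measure ℝ) [IsFiniteMeasure μ₁] (hμ₁supp : μ₁ (Set.Ico q 1)ᶜ = 0)
    (μ : Measure ℝ) (hμ0 : μ (Set.Ioi (0 : ℝ))ᶜ = 0)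
    (hμ : ∀ M : Set ℝ, MeasurableSet M → M ⊆ Set.Ico q 1 → ∀ n : ℤ,
      μ ((fun t => q ^ n * t) '' M) = ENNReal.ofReal (q ^ n) * μ₁ M)
    (X : Lp ℂ 2 μ →ₗ.[ℂ] Lp ℂ 2 μ)
    (hXdom : ∀ f : Lp ℂ 2 μ, f ∈ X.domain ↔ MemLp (fun t : ℝ => (t : ℂ)⁻¹ * f t) 2 μ)
    (hX : ∀ f : X.domain, ∀ᵐ t ∂μ,
      (X f) t = Complex.I * (t : ℂ)⁻¹ *
        ((f : Lp ℂ 2 μ) (q⁻¹ * t) - (f : Lp ℂ 2 μ) (q * t)))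
    (h : ℝ → ℂ) (hh : MemLp h 2 μ₁)
    (he ho : ℝ → ℂ) (hhe : IsEvenExt q h he) (hho : IsOddExt q h ho) :
    (∃ ge : Lp ℂ 2 μ, (∀ᵐ t ∂μ, ge t = he t) ∧
      ∃ hmem : ge ∈ X.adjoint.domain,
        ∀ᵐ t ∂μ, (X.adjoint ⟨ge, hmem⟩) t =
          if 1 ≤ t ∧ t < q⁻¹ then -Complex.I * (t : ℂ)⁻¹ * h (q * t) else 0) ∧
    (∃ go : Lp ℂ 2 μ, (∀ᵐ t ∂μ, go t = ho t) ∧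
      ∃ hmem : go ∈ X.adjoint.domain,
        ∀ᵐ t ∂μ, (X.adjoint ⟨go, hmem⟩) t =
          if q ≤ t ∧ t < 1 then -Complex.I * (t : ℂ)⁻¹ * h t else 0) :=
  stmt_5_general q hq0 hq1 μ₁ hμ₁supp μ hμ0 hμ X hXdom hX h hh he ho hhe hho
end

section
/- (Example 5 irreducibility computation) Let K be a complex Hilbert space and T a bounded operator on K such that (1/3)·I ≤ T*T ≤ (2/3)·I and the only bounded operators commuting with both T and T* are the scalar multiples of the identity. Let Z be the unitary operator on K ⊕ K given by the operator matrix Z = [[T, √(I − TT*)], [−√(I − T*T), T*]]. If B and C are bounded self-adjoint operators on K such that the diagonal operator A = B ⊕ C on K ⊕ K commutes with Z, then B = C = λ·I for some λ ∈ ℂ. -/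
open ContinuousLinearMap

/-!
The second row `(-√(I − T*T), T*)` of `Z` already forces the result. Commuting with
`B ⊕ C`, it gives `C T* = T* C` and `C √(I − T*T) = √(I − T*T) B`. As `C` is self-adjoint it
then commutes with `T` too, so `C = λ·I` by irreducibility; and `T*T ≤ (2/3)·I` makes
`√(I − T*T)` injective, so it can be cancelled from `λ √(I − T*T) = √(I − T*T) B`.
-/

section BlockOperator

variable {R : Type*} [Semiring R] {E F : Type*} [AddCommMonoid E] [Module R E]
  [TopologicalSpace E] [AddCommMonoid F] [Module R F] [TopologicalSpace F] {p : ENNReal}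

/-- `hZ` says that `Z` is the operator matrix `[[P, Q], [U, V]]`, and `hBC` that it commutes
with `B ⊕ C`. -/
theorem intertwine_snd_row_of_commute_diag {Z : WithLp p (E × F) → WithLp p (E × F)}
    {P : E →L[R] E} {Q : F →L[R] E} {U : E →L[R] F} {V : F →L[R] F}
    {B : E →L[R] E} {C : F →L[R] F}
    (hZ : ∀ x y, Z ((WithLp.equiv p (E × F)).symm (x, y)) =
      (WithLp.equiv p (E × F)).symm (P x + Q y, U x + V y))
    (hBC : ∀ x y, Z ((WithLp.equiv p (E × F)).symm (B x, C y)) =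
      (WithLp.equiv p (E × F)).symm
        (B ((WithLp.equiv p (E × F)) (Z ((WithLp.equiv p (E × F)).symm (x, y)))).1,
         C ((WithLp.equiv p (E × F)) (Z ((WithLp.equiv p (E × F)).symm (x, y)))).2)) :
    C ∘L U = U ∘L B ∧ C ∘L V = V ∘L C := by
  have hrow : ∀ x y, U (B x) + V (C y) = C (U x + V y) := fun x y => by
    have h := congrArg (fun z => (WithLp.equiv p (E × F) z).2) (hBC x y)
    rwa [hZ, hZ, Equiv.apply_symm_apply, Equiv.apply_symm_apply] at h
  constructor
  · ext x; simpa using (hrow x 0).symm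
  · ext y; simpa using (hrow 0 y).symm

end BlockOperator

section Injectivity

variable {𝕜 E : Type*} [RCLike 𝕜] [NormedAddCommGroup E] [InnerProductSpace 𝕜 E]

theorem eq_zero_of_apply_eq_self_of_isPositive_smul_one_sub {S : E →L[𝕜] E} {c : 𝕜}
    (hS : (c • 1 - S).IsPositive) (hc : RCLike.re c < 1) {x : E} (hx : S x = x) : x = 0 := by
  have hnonneg : 0 ≤ (RCLike.re c - 1) * ‖x‖ ^ 2 := by
    have h := hS.re_inner_nonneg_right x
    have hcx : c • x - x = (c - 1) • x := by rw [sub_smul, one_smul]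
    rwa [sub_apply, smul_apply, one_apply_eq_self, hx, hcx, inner_smul_right,
      inner_self_eq_norm_sq_to_K, ← RCLike.ofReal_pow, RCLike.re_mul_ofReal, map_sub,
      RCLike.one_re] at h
  have hnorm : ‖x‖ ^ 2 ≤ 0 := by nlinarith [sq_nonneg ‖x‖]
  exact norm_eq_zero.mp (pow_eq_zero_iff two_ne_zero |>.mp (le_antisymm hnorm (sq_nonneg _)))

theorem injective_of_comp_self_eq_one_sub {R S : E →L[𝕜] E} {c : 𝕜} (hR : R ∘L R = 1 - S)
    (hS : (c • 1 - S).IsPositive) (hc : RCLike.re c < 1) : Function.Injective R := by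
  refine (injective_iff_map_eq_zero R).mpr fun x hx => ?_
  refine eq_zero_of_apply_eq_self_of_isPositive_smul_one_sub hS hc ?_
  have h := congrArg (fun A => A x) hR
  simp only [comp_apply, hx, map_zero, sub_apply, one_apply_eq_self] at h
  exact (sub_eq_zero.mp h.symm).symm

end Injectivity

theorem stmt_18_general {K : Type*} [NormedAddCommGroup K] [InnerProductSpace ℂ K] [CompleteSpace K]
    (T : K →L[ℂ] K)
    (hup : ((2/3 : ℂ) • (1 : K →L[ℂ] K) - adjoint T ∘L T).IsPositive)
    (hcomm : ∀ B : K →L[ℂ] K, B ∘L T = T ∘L B → B ∘L adjoint T = adjoint T ∘L B →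
      ∃ c : ℂ, B = c • (1 : K →L[ℂ] K))
    (R₁ R₂ : K →L[ℂ] K)
    (hR₁sq : R₁ ∘L R₁ = 1 - adjoint T ∘L T)
    (Z : WithLp 2 (K × K) ≃ₗᵢ[ℂ] WithLp 2 (K × K))
    (hZ : ∀ x y : K, Z ((WithLp.equiv 2 (K × K)).symm (x, y)) =
      (WithLp.equiv 2 (K × K)).symm (T x + R₂ y, -(R₁ x) + adjoint T y))
    (B C : K →L[ℂ] K) (hC : IsSelfAdjoint C)
    (hBCZ : ∀ x y : K,
      Z ((WithLp.equiv 2 (K × K)).symm (B x, C y)) =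
        (WithLp.equiv 2 (K × K)).symm
          (B ((WithLp.equiv 2 (K × K)) (Z ((WithLp.equiv 2 (K × K)).symm (x, y)))).1,
           C ((WithLp.equiv 2 (K × K)) (Z ((WithLp.equiv 2 (K × K)).symm (x, y)))).2)) :
    ∃ c : ℂ, B = c • (1 : K →L[ℂ] K) ∧ C = c • (1 : K →L[ℂ] K) := by
  obtain ⟨hCR₁, hCTstar⟩ := intertwine_snd_row_of_commute_diag (U := -R₁) (V := adjoint T) hZ hBCZ
  have hCT : C ∘L T = T ∘L C := by
    have h := Commute.star_left (y := T) hCTstar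
    rw [hC.star_eq] at h
    exact h.eq
  obtain ⟨d, hd⟩ := hcomm C hCT hCTstar
  have hR₁ : Function.Injective R₁ := injective_of_comp_self_eq_one_sub hR₁sq hup (by norm_num)
  refine ⟨d, ?_, hd⟩
  ext x
  apply hR₁
  simpa [hd] using congrArg (fun A => A x) hCR₁.symm

/-- **Example 5.** Let `T` be a bounded operator on a complex Hilbert
space `K` with `(1/3)·I ≤ T*T ≤ (2/3)·I` whose joint commutant with `T*` is trivial,
and let `Z` be the unitary on `K ⊕ K` given by the operator matrix
`[[T, √(I − TT*)], [−√(I − T*T), T*]]`.  If `B, C` are bounded self-adjoint operators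
on `K` such that `A = B ⊕ C` commutes with `Z`, then `B = C = λ·I` for some `λ ∈ ℂ`. -/
theorem stmt_18 {K : Type*} [NormedAddCommGroup K] [InnerProductSpace ℂ K] [CompleteSpace K]
    (T : K →L[ℂ] K)
    (hlow : (adjoint T ∘L T - (1/3 : ℂ) • (1 : K →L[ℂ] K)).IsPositive)
    (hup : ((2/3 : ℂ) • (1 : K →L[ℂ] K) - adjoint T ∘L T).IsPositive)
    (hcomm : ∀ B : K →L[ℂ] K, B ∘L T = T ∘L B → B ∘L adjoint T = adjoint T ∘L B →
      ∃ c : ℂ, B = c • (1 : K →L[ℂ] K))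
    (R₁ R₂ : K →L[ℂ] K)
    (hR₁pos : R₁.IsPositive) (hR₂pos : R₂.IsPositive)
    (hR₁sq : R₁ ∘L R₁ = 1 - adjoint T ∘L T)
    (hR₂sq : R₂ ∘L R₂ = 1 - T ∘L adjoint T)
    (Z : WithLp 2 (K × K) ≃ₗᵢ[ℂ] WithLp 2 (K × K))
    (hZ : ∀ x y : K, Z ((WithLp.equiv 2 (K × K)).symm (x, y)) =
      (WithLp.equiv 2 (K × K)).symm (T x + R₂ y, -(R₁ x) + adjoint T y))
    (B C : K →L[ℂ] K) (hB : IsSelfAdjoint B) (hC : IsSelfAdjoint C)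
    (hBCZ : ∀ x y : K,
      Z ((WithLp.equiv 2 (K × K)).symm (B x, C y)) =
        (WithLp.equiv 2 (K × K)).symm
          (B ((WithLp.equiv 2 (K × K)) (Z ((WithLp.equiv 2 (K × K)).symm (x, y)))).1,
           C ((WithLp.equiv 2 (K × K)) (Z ((WithLp.equiv 2 (K × K)).symm (x, y)))).2)) :
    ∃ c : ℂ, B = c • (1 : K →L[ℂ] K) ∧ C = c • (1 : K →L[ℂ] K) :=
  stmt_18_general T hup hcomm R₁ R₂ hR₁sq Z hZ B C hC hBCZ
end

section
/- For 0 < q ≠ 1, there exist *-algebra isomorphisms ρ₁ and ρ₂ from A(q) onto A(q⁻¹) determined on the generators by ρ₁(x) = p, ρ₁(p) = x, ρ₁(u) = u, and ρ₂(x) = x, ρ₂(p) = p, ρ₂(u) = −u*. In particular, the *-algebras A(q) and A(q⁻¹) are isomorphic. -/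
noncomputable section

/-- The generator `p` of the `q`-deformed Heisenberg algebra (inside the free algebra). -/
def pGen : FreeAlgebra ℂ (Fin 4) := FreeAlgebra.ι ℂ 0
/-- The generator `x`. -/
def xGen : FreeAlgebra ℂ (Fin 4) := FreeAlgebra.ι ℂ 1
/-- The generator `u`. -/
def uGen : FreeAlgebra ℂ (Fin 4) := FreeAlgebra.ι ℂ 2
/-- The generator `u⁻¹`. -/
def vGen : FreeAlgebra ℂ (Fin 4) := FreeAlgebra.ι ℂ 3

/-- The defining relations of the `q`-deformed Heisenberg algebra `A(q)`:
`up = q pu`, `ux = q⁻¹ xu`, `uu⁻¹ = u⁻¹u = 1`,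
`px − q xp = i(q^{3/2} − q^{−1/2})u`, `xp − q px = −i(q^{3/2} − q^{−1/2})u⁻¹`. -/
inductive HeisRel (q : ℝ) : FreeAlgebra ℂ (Fin 4) → FreeAlgebra ℂ (Fin 4) → Prop
  | up : HeisRel q (uGen * pGen) ((q : ℂ) • (pGen * uGen))
  | ux : HeisRel q (uGen * xGen) ((q : ℂ)⁻¹ • (xGen * uGen))
  | uv : HeisRel q (uGen * vGen) 1
  | vu : HeisRel q (vGen * uGen) 1
  | px : HeisRel q (pGen * xGen - (q : ℂ) • (xGen * pGen))
      ((Complex.I * ((q ^ ((3 : ℝ)/2) - q ^ (-(1 : ℝ)/2) : ℝ) : ℂ)) • uGen)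
  | xp : HeisRel q (xGen * pGen - (q : ℂ) • (pGen * xGen))
      ((-(Complex.I * ((q ^ ((3 : ℝ)/2) - q ^ (-(1 : ℝ)/2) : ℝ) : ℂ))) • vGen)

/-- The `q`-deformed Heisenberg algebra `A(q)`. -/
abbrev HeisAlg (q : ℝ) : Type := RingQuot (HeisRel q)

/-- The canonical quotient map onto `A(q)`. -/
def heisMk (q : ℝ) : FreeAlgebra ℂ (Fin 4) →ₐ[ℂ] HeisAlg q :=
  RingQuot.mkAlgHom ℂ (HeisRel q)

/-- `s` is the involution of `A(q)`: antilinear, antimultiplicative, involutive, and on the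
generators `p* = p`, `x* = x`, `u* = u⁻¹`, `(u⁻¹)* = u`. -/
def IsInvolution (q : ℝ) (s : HeisAlg q → HeisAlg q) : Prop :=
  (∀ a b, s (a + b) = s a + s b) ∧
  (∀ (c : ℂ) (a), s (c • a) = (starRingEnd ℂ) c • s a) ∧
  (∀ a b, s (a * b) = s b * s a) ∧
  (∀ a, s (s a) = a) ∧
  s (heisMk q pGen) = heisMk q pGen ∧
  s (heisMk q xGen) = heisMk q xGen ∧
  s (heisMk q uGen) = heisMk q vGen ∧
  s (heisMk q vGen) = heisMk q uGen

/-! The relations of `A(q)` go over into those of `A(q⁻¹)` when `q` is replaced by `q⁻¹` and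
either `p` and `x` are exchanged, or `u, u⁻¹` are replaced by `-u⁻¹, -u`: solving
`px - q xp = c(q) u` for `xp` gives `xp - q⁻¹ px = -q⁻¹ c(q) u`, and `c(q⁻¹) = -q⁻¹ c(q)` for the
constant `c(q) = i(q^{3/2} - q^{-1/2})`. So both substitutions define algebra maps
`A(q) → A(q⁻¹)`, and the same substitutions back are their inverses. They intertwine any two
involutions `s, s'` because `s' ∘ ρ ∘ s` is again an algebra map, which agrees with `ρ` on the
generators. -/

def heisConst (q : ℝ) : ℂ := Complex.I * ((q ^ ((3 : ℝ)/2) - q ^ (-(1 : ℝ)/2) : ℝ) : ℂ)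

theorem heisConst_inv {q : ℝ} (hq : 0 < q) : heisConst q⁻¹ = -(q : ℂ)⁻¹ * heisConst q := by
  have hpow : q⁻¹ ^ ((3 : ℝ)/2) - q⁻¹ ^ (-(1 : ℝ)/2) =
      -q⁻¹ * (q ^ ((3 : ℝ)/2) - q ^ (-(1 : ℝ)/2)) := by
    rw [Real.inv_rpow hq.le, Real.inv_rpow hq.le, ← Real.rpow_neg_one q, ← Real.rpow_neg hq.le,
      ← Real.rpow_neg hq.le, neg_mul, mul_sub, ← Real.rpow_add hq, ← Real.rpow_add hq]
    norm_num
  simp only [heisConst, hpow]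
  push_cast
  ring

section Tuples

variable {A : Type*} [Ring A] [Algebra ℂ A]

theorem inv_mul_eq_inv_smul_of_mul_eq_smul {U V a : A} {t : ℂ} (ht : t ≠ 0) (huv : U * V = 1)
    (hvu : V * U = 1) (h : U * a = t • (a * U)) : V * a = t⁻¹ • (a * V) := by
  have : a * V = t • (V * a) := by
    rw [← one_mul (a * V), ← hvu, mul_assoc, ← mul_assoc U, h, smul_mul_assoc, mul_smul_comm,
      mul_assoc, huv, mul_one]
  rw [this, inv_smul_smul₀ ht]

structure IsHeisTuple (q : ℝ) (P X U V : A) : Prop where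
  up : U * P = (q : ℂ) • (P * U)
  ux : U * X = (q : ℂ)⁻¹ • (X * U)
  uv : U * V = 1
  vu : V * U = 1
  px : P * X - (q : ℂ) • (X * P) = heisConst q • U
  xp : X * P - (q : ℂ) • (P * X) = -heisConst q • V

namespace IsHeisTuple

variable {q : ℝ} {P X U V : A}

theorem swap (h : IsHeisTuple q P X U V) (hq : 0 < q) : IsHeisTuple q⁻¹ X P U V := by
  have hq' : (q : ℂ) ≠ 0 := by exact_mod_cast hq.ne'
  refine ⟨?_, ?_, h.uv, h.vu, ?_, ?_⟩
  · simpa using h.ux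
  · simpa using h.up
  · rw [heisConst_inv hq, sub_eq_iff_eq_add.mp h.px]
    push_cast
    rw [smul_add, inv_smul_smul₀ hq']
    module
  · rw [heisConst_inv hq, sub_eq_iff_eq_add.mp h.xp]
    push_cast
    rw [smul_add, inv_smul_smul₀ hq']
    module

theorem neg_inv (h : IsHeisTuple q P X U V) (hq : 0 < q) : IsHeisTuple q⁻¹ P X (-V) (-U) := by
  have hq' : (q : ℂ) ≠ 0 := by exact_mod_cast hq.ne'
  have hvp := inv_mul_eq_inv_smul_of_mul_eq_smul hq' h.uv h.vu h.up
  have hvx := inv_mul_eq_inv_smul_of_mul_eq_smul (inv_ne_zero hq') h.uv h.vu h.ux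
  refine ⟨?_, ?_, by simpa using h.vu, by simpa using h.uv, ?_, ?_⟩
  · simpa using hvp
  · simpa using hvx
  · rw [heisConst_inv hq, sub_eq_iff_eq_add.mp h.xp]
    push_cast
    rw [smul_add, inv_smul_smul₀ hq']
    module
  · rw [heisConst_inv hq, sub_eq_iff_eq_add.mp h.px]
    push_cast
    rw [smul_add, inv_smul_smul₀ hq']
    module

end IsHeisTuple

section Presentation

variable {q : ℝ} {P X U V : A}

theorem heisMk_eq_of_rel {a b : FreeAlgebra ℂ (Fin 4)} (r : HeisRel q a b) :
    heisMk q a = heisMk q b :=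
  RingQuot.mkAlgHom_rel ℂ r

theorem isHeisTuple_heisMk (q : ℝ) :
    IsHeisTuple q (heisMk q pGen) (heisMk q xGen) (heisMk q uGen) (heisMk q vGen) where
  up := by simpa only [map_mul, map_smul] using heisMk_eq_of_rel HeisRel.up
  ux := by simpa only [map_mul, map_smul] using heisMk_eq_of_rel HeisRel.ux
  uv := by simpa only [map_mul, map_one] using heisMk_eq_of_rel HeisRel.uv
  vu := by simpa only [map_mul, map_one] using heisMk_eq_of_rel HeisRel.vu
  px := by simpa only [map_sub, map_mul, map_smul, heisConst] using heisMk_eq_of_rel HeisRel.px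
  xp := by simpa only [map_sub, map_mul, map_smul, heisConst] using heisMk_eq_of_rel HeisRel.xp

namespace IsHeisTuple

def lift (h : IsHeisTuple q P X U V) : HeisAlg q →ₐ[ℂ] A :=
  RingQuot.liftAlgHom ℂ ⟨FreeAlgebra.lift ℂ ![P, X, U, V], fun a b r => by
    cases r <;>
      simp only [map_mul, map_sub, map_smul, map_one, pGen, xGen, uGen, vGen,
        FreeAlgebra.lift_ι_apply, Matrix.cons_val]
    exacts [h.up, h.ux, h.uv, h.vu, h.px, h.xp]⟩

variable (h : IsHeisTuple q P X U V)

@[simp] theorem lift_pGen : h.lift (heisMk q pGen) = P := by simp [lift, heisMk, pGen]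
@[simp] theorem lift_xGen : h.lift (heisMk q xGen) = X := by simp [lift, heisMk, xGen]
@[simp] theorem lift_uGen : h.lift (heisMk q uGen) = U := by simp [lift, heisMk, uGen]
@[simp] theorem lift_vGen : h.lift (heisMk q vGen) = V := by simp [lift, heisMk, vGen]

end IsHeisTuple

theorem heisAlg_hom_ext {f g : HeisAlg q →ₐ[ℂ] A}
    (hp : f (heisMk q pGen) = g (heisMk q pGen)) (hx : f (heisMk q xGen) = g (heisMk q xGen))
    (hu : f (heisMk q uGen) = g (heisMk q uGen)) (hv : f (heisMk q vGen) = g (heisMk q vGen)) :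
    f = g := by
  refine RingQuot.ringQuot_ext' _ _ _ (FreeAlgebra.hom_ext (funext fun i => ?_))
  fin_cases i
  exacts [hp, hx, hu, hv]

end Presentation

end Tuples

section Isomorphisms

variable {q : ℝ} (hq : 0 < q)

def heisSwapEquiv : HeisAlg q ≃ₐ[ℂ] HeisAlg q⁻¹ :=
  have hfwd : IsHeisTuple q (heisMk q⁻¹ xGen) (heisMk q⁻¹ pGen) (heisMk q⁻¹ uGen)
      (heisMk q⁻¹ vGen) := by
    simpa using (isHeisTuple_heisMk q⁻¹).swap (inv_pos.2 hq)
  AlgEquiv.ofAlgHom hfwd.lift ((isHeisTuple_heisMk q).swap hq).lift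
    (heisAlg_hom_ext (by simp) (by simp) (by simp) (by simp))
    (heisAlg_hom_ext (by simp) (by simp) (by simp) (by simp))

def heisNegInvEquiv : HeisAlg q ≃ₐ[ℂ] HeisAlg q⁻¹ :=
  have hfwd : IsHeisTuple q (heisMk q⁻¹ pGen) (heisMk q⁻¹ xGen) (-heisMk q⁻¹ vGen)
      (-heisMk q⁻¹ uGen) := by
    simpa using (isHeisTuple_heisMk q⁻¹).neg_inv (inv_pos.2 hq)
  AlgEquiv.ofAlgHom hfwd.lift ((isHeisTuple_heisMk q).neg_inv hq).lift
    (heisAlg_hom_ext (by simp) (by simp) (by simp) (by simp))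
    (heisAlg_hom_ext (by simp) (by simp) (by simp) (by simp))

end Isomorphisms

namespace IsInvolution

variable {q q' : ℝ} {s : HeisAlg q → HeisAlg q} {s' : HeisAlg q' → HeisAlg q'}

theorem apply_add (hs : IsInvolution q s) (a b : HeisAlg q) : s (a + b) = s a + s b := hs.1 a b

theorem apply_smul (hs : IsInvolution q s) (c : ℂ) (a : HeisAlg q) :
    s (c • a) = starRingEnd ℂ c • s a := hs.2.1 c a

theorem apply_mul (hs : IsInvolution q s) (a b : HeisAlg q) : s (a * b) = s b * s a := hs.2.2.1 a b

theorem apply_apply (hs : IsInvolution q s) (a : HeisAlg q) : s (s a) = a := hs.2.2.2.1 a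

theorem apply_one (hs : IsInvolution q s) : s 1 = 1 := by
  simpa [hs.apply_apply] using (hs.apply_mul (s 1) 1).symm

theorem apply_zero (hs : IsInvolution q s) : s 0 = 0 := by
  simpa using hs.apply_smul 0 0

theorem apply_neg (hs : IsInvolution q s) (a : HeisAlg q) : s (-a) = -s a :=
  (AddMonoidHom.mk' s hs.apply_add).map_neg a

def conjAlgHom (hs : IsInvolution q s) (hs' : IsInvolution q' s')
    (ρ : HeisAlg q →ₐ[ℂ] HeisAlg q') : HeisAlg q →ₐ[ℂ] HeisAlg q' where
  toFun a := s' (ρ (s a))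
  map_one' := by rw [hs.apply_one, map_one, hs'.apply_one]
  map_mul' a b := by rw [hs.apply_mul, map_mul, hs'.apply_mul]
  map_zero' := by rw [hs.apply_zero, map_zero, hs'.apply_zero]
  map_add' a b := by rw [hs.apply_add, map_add, hs'.apply_add]
  commutes' c := by
    simp only [Algebra.algebraMap_eq_smul_one, hs.apply_smul, hs.apply_one, map_smul,
      _root_.map_one, hs'.apply_smul, hs'.apply_one, Complex.conj_conj]

theorem intertwines_of_gens (hs : IsInvolution q s) (hs' : IsInvolution q' s')
    (ρ : HeisAlg q →ₐ[ℂ] HeisAlg q')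
    (hp : ρ (s (heisMk q pGen)) = s' (ρ (heisMk q pGen)))
    (hx : ρ (s (heisMk q xGen)) = s' (ρ (heisMk q xGen)))
    (hu : ρ (s (heisMk q uGen)) = s' (ρ (heisMk q uGen)))
    (hv : ρ (s (heisMk q vGen)) = s' (ρ (heisMk q vGen))) (a : HeisAlg q) :
    ρ (s a) = s' (ρ a) := by
  have hconj : conjAlgHom hs hs' ρ = ρ := by
    refine heisAlg_hom_ext ?_ ?_ ?_ ?_ <;>
      simp only [conjAlgHom, AlgHom.coe_mk, RingHom.coe_mk, MonoidHom.coe_mk, OneHom.coe_mk,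
        hp, hx, hu, hv, hs'.apply_apply]
  have := congrArg (· (s a)) hconj
  simpa [conjAlgHom, hs.apply_apply] using this.symm

end IsInvolution

section Intertwining

variable {q : ℝ} (hq : 0 < q) {s : HeisAlg q → HeisAlg q} {s' : HeisAlg q⁻¹ → HeisAlg q⁻¹}

theorem heisSwapEquiv_apply_involution (hs : IsInvolution q s) (hs' : IsInvolution q⁻¹ s')
    (a : HeisAlg q) : heisSwapEquiv hq (s a) = s' (heisSwapEquiv hq a) := by
  have ⟨_, _, _, _, hp, hx, hu, hv⟩ := hs
  have ⟨_, _, _, _, hp', hx', hu', hv'⟩ := hs'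
  refine IsInvolution.intertwines_of_gens hs hs' (heisSwapEquiv hq).toAlgHom ?_ ?_ ?_ ?_ a <;>
    simp [heisSwapEquiv, hp, hx, hu, hv, hp', hx', hu', hv']

theorem heisNegInvEquiv_apply_involution (hs : IsInvolution q s) (hs' : IsInvolution q⁻¹ s')
    (a : HeisAlg q) : heisNegInvEquiv hq (s a) = s' (heisNegInvEquiv hq a) := by
  have ⟨_, _, _, _, hp, hx, hu, hv⟩ := hs
  have ⟨_, _, _, _, hp', hx', hu', hv'⟩ := hs'
  refine IsInvolution.intertwines_of_gens hs hs' (heisNegInvEquiv hq).toAlgHom ?_ ?_ ?_ ?_ a <;>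
    simp [heisNegInvEquiv, hp, hx, hu, hv, hp', hx', hu', hv', hs'.apply_neg]

end Intertwining

theorem stmt_19_general (q : ℝ) (hq0 : 0 < q) :
    ∃ ρ₁ ρ₂ : HeisAlg q ≃ₐ[ℂ] HeisAlg q⁻¹,
      ρ₁ (heisMk q xGen) = heisMk q⁻¹ pGen ∧
      ρ₁ (heisMk q pGen) = heisMk q⁻¹ xGen ∧
      ρ₁ (heisMk q uGen) = heisMk q⁻¹ uGen ∧
      ρ₂ (heisMk q xGen) = heisMk q⁻¹ xGen ∧
      ρ₂ (heisMk q pGen) = heisMk q⁻¹ pGen ∧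
      ρ₂ (heisMk q uGen) = -(heisMk q⁻¹ vGen) ∧
      (∀ (s : HeisAlg q → HeisAlg q) (s' : HeisAlg q⁻¹ → HeisAlg q⁻¹),
        IsInvolution q s → IsInvolution q⁻¹ s' →
        (∀ a, ρ₁ (s a) = s' (ρ₁ a)) ∧ (∀ a, ρ₂ (s a) = s' (ρ₂ a))) := by
  refine ⟨heisSwapEquiv hq0, heisNegInvEquiv hq0, ?_, ?_, ?_, ?_, ?_, ?_, fun s s' hs hs' =>
    ⟨heisSwapEquiv_apply_involution hq0 hs hs', heisNegInvEquiv_apply_involution hq0 hs hs'⟩⟩ <;>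
    simp [heisSwapEquiv, heisNegInvEquiv]

/-- For `0 < q ≠ 1` there are `*`-algebra isomorphisms
`ρ₁, ρ₂ : A(q) → A(q⁻¹)` with `ρ₁(x) = p`, `ρ₁(p) = x`, `ρ₁(u) = u` and `ρ₂(x) = x`,
`ρ₂(p) = p`, `ρ₂(u) = −u*`; in particular `A(q)` and `A(q⁻¹)` are isomorphic as
`*`-algebras (they intertwine the involutions). -/
theorem stmt_19 (q : ℝ) (hq0 : 0 < q) (hq1 : q ≠ 1) :
    ∃ ρ₁ ρ₂ : HeisAlg q ≃ₐ[ℂ] HeisAlg q⁻¹,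
      ρ₁ (heisMk q xGen) = heisMk q⁻¹ pGen ∧
      ρ₁ (heisMk q pGen) = heisMk q⁻¹ xGen ∧
      ρ₁ (heisMk q uGen) = heisMk q⁻¹ uGen ∧
      ρ₂ (heisMk q xGen) = heisMk q⁻¹ xGen ∧
      ρ₂ (heisMk q pGen) = heisMk q⁻¹ pGen ∧
      ρ₂ (heisMk q uGen) = -(heisMk q⁻¹ vGen) ∧
      (∀ (s : HeisAlg q → HeisAlg q) (s' : HeisAlg q⁻¹ → HeisAlg q⁻¹),
        IsInvolution q s → IsInvolution q⁻¹ s' →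
        (∀ a, ρ₁ (s a) = s' (ρ₁ a)) ∧ (∀ a, ρ₂ (s a) = s' (ρ₂ a))) :=
  stmt_19_general q hq0
end
end
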